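/- arXiv:1711.03783 — 7 statements merged into one kernel-verified Lean document; each statement's English description precedes it below -/
import Mathlib

section
/- Let M¹ ∈ ℝ^{m₁×ℓ} and M² ∈ ℝ^{m₂×ℓ} be matrices. Then there exists a constant σ = σ(M¹, M²) ≥ 0, depending only on M¹ and M², with the following property: for all d¹ ∈ ℝ^{m₁} and d² ∈ ℝ^{m₂} such that the set L = {u ∈ ℝ^ℓ : M¹u ≤ d¹, M²u = d²} is nonempty, and for every x ∈ ℝ^ℓ, there exists a point x* ∈ L satisfying ‖x − x*‖₂ ≤ σ · ( ‖(M¹x − d¹)⁺‖₁ + ‖M²x − d²‖₁ ). -/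
/-!
Let `x*` be the metric projection of `x` onto the polyhedron `L = {u | ⟪aᵢ, u⟫ ≤ dᵢ}` (equations
count as two inequalities). The residual `v = x - x*` lies in the normal cone of `L` at `x*`, which
by Farkas' lemma (finitely generated cones are closed) is the cone spanned by the active `aᵢ`. By
Carathéodory, `v = ∑ cᵢ aᵢ` with `cᵢ ≥ 0` supported on active indices carrying linearly independent
`aᵢ`, so `cᵢ ≤ C ‖v‖` with `C` depending only on the `aᵢ`. Since `⟪aᵢ, v⟫ = ⟪aᵢ, x⟫ - dᵢ` for
active `i`,
`‖v‖² = ∑ cᵢ ⟪aᵢ, v⟫ ≤ C ‖v‖ ∑ (⟪aᵢ, x⟫ - dᵢ)⁺`.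
-/

open Matrix

/-- The ℓ₁ norm on `Fin n → ℝ`. -/
noncomputable def l1norm {n : ℕ} (x : Fin n → ℝ) : ℝ := ∑ i, |x i|

/-- The Euclidean (ℓ₂) norm on `Fin n → ℝ`. -/
noncomputable def l2norm {n : ℕ} (x : Fin n → ℝ) : ℝ := Real.sqrt (∑ i, (x i) ^ 2)

open Function Set

section OrderedField

variable {𝕜 E ι : Type*} [Field 𝕜] [LinearOrder 𝕜] [IsStrictOrderedRing 𝕜]
  [AddCommGroup E] [Module 𝕜 E] [Fintype ι]

theorem exists_pos_relation_of_not_linearIndepOn {a : ι → E} {s : Set ι}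
    (h : ¬ LinearIndepOn 𝕜 a s) :
    ∃ μ : ι → 𝕜, support μ ⊆ s ∧ ∑ i, μ i • a i = 0 ∧ ∃ i, 0 < μ i := by
  classical
  simp only [linearIndepOn_iff'', not_forall] at h
  obtain ⟨t, g, hts, hgt, hsum, i, -, hgi⟩ := h
  have hsupp : support g ⊆ s := fun j hj => hts (by_contra fun hjt => hj (hgt j hjt))
  have hsum' : ∑ j, g j • a j = 0 := by
    rw [← hsum]
    exact (Finset.sum_subset (Finset.subset_univ t) fun j _ hj => by simp [hgt j hj]).symm
  rcases lt_or_gt_of_ne hgi with hneg | hpos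
  · exact ⟨-g, by simpa using hsupp, by simp [hsum'], i, by simpa using hneg⟩
  · exact ⟨g, hsupp, hsum', i, hpos⟩

theorem exists_nonneg_repr_support_ssubset {a : ι → E} {l : ι → 𝕜} (hl : 0 ≤ l)
    (hdep : ¬ LinearIndepOn 𝕜 a (support l)) :
    ∃ l' : ι → 𝕜, 0 ≤ l' ∧ support l' ⊂ support l ∧ ∑ i, l' i • a i = ∑ i, l i • a i := by
  classical
  obtain ⟨μ, hμl, hμsum, i₀, hi₀⟩ := exists_pos_relation_of_not_linearIndepOn hdep
  -- the largest step along `-μ` that keeps the coefficients nonnegative kills one of them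
  obtain ⟨j, hj, hjmin⟩ := (Finset.univ.filter (0 < μ ·)).exists_min_image (fun i => l i / μ i)
    ⟨i₀, by simpa using hi₀⟩
  have hμj : 0 < μ j := (Finset.mem_filter.1 hj).2
  set t := l j / μ j
  have ht : 0 ≤ t := div_nonneg (hl j) hμj.le
  have hle : ∀ i, t * μ i ≤ l i := fun i => by
    rcases le_or_gt (μ i) 0 with hμi | hμi
    · exact (mul_nonpos_of_nonneg_of_nonpos ht hμi).trans (hl i)
    · exact (le_div_iff₀ hμi).1 (hjmin i (by simpa using hμi))
  refine ⟨l - t • μ, fun i => by simpa using hle i, ?_, ?_⟩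
  · refine ssubset_of_subset_of_ne (fun i hi => ?_) fun heq => ?_
    · by_contra hli
      have : μ i = 0 := notMem_support.1 fun h => hli (hμl h)
      exact hi (by simp [notMem_support.1 hli, this])
    · have hjl : j ∈ support l := hμl hμj.ne'
      rw [← heq] at hjl
      exact hjl (by simp [t, div_mul_cancel₀ _ hμj.ne'])
  · simp [sub_smul, Finset.sum_sub_distrib, mul_smul, ← Finset.smul_sum, hμsum]

/-- Carathéodory's theorem for cones. -/
theorem exists_nonneg_repr_linearIndepOn (a : ι → E) {l : ι → 𝕜} (hl : 0 ≤ l) :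
    ∃ l' : ι → 𝕜, 0 ≤ l' ∧ support l' ⊆ support l ∧ LinearIndepOn 𝕜 a (support l') ∧
      ∑ i, l' i • a i = ∑ i, l i • a i := by
  induction hs : support l using WellFoundedLT.induction generalizing l with
  | ind s ih =>
    by_cases hind : LinearIndepOn 𝕜 a (support l)
    · exact ⟨l, hl, hs.subset, hind, rfl⟩
    obtain ⟨l₁, hl₁, hsub, hsum⟩ := exists_nonneg_repr_support_ssubset hl hind
    obtain ⟨l', hl', hsub', hind', hsum'⟩ := ih _ (hs ▸ hsub) hl₁ rfl
    exact ⟨l', hl', hsub'.trans (hs ▸ hsub.subset), hind', hsum'.trans hsum⟩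

theorem PointedCone.mem_hull_image_iff {a : ι → E} {s : Set ι} {x : E} :
    x ∈ PointedCone.hull 𝕜 (a '' s) ↔
      ∃ c : ι → 𝕜, 0 ≤ c ∧ support c ⊆ s ∧ ∑ i, c i • a i = x := by
  constructor
  · rw [PointedCone.hull, Finsupp.mem_span_image_iff_linearCombination]
    rintro ⟨c, hcs, rfl⟩
    refine ⟨fun i => c i, fun i => (c i).2, fun i hi => hcs ?_, ?_⟩
    · simpa [Subtype.ext_iff] using hi
    · rw [Finsupp.linearCombination_apply, Finsupp.sum_fintype _ _ fun _ => zero_smul _ (a _)]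
      simp only [Nonneg.coe_smul]
  · rintro ⟨c, hc, hcs, rfl⟩
    refine Submodule.sum_mem _ fun i _ => ?_
    by_cases hi : c i = 0
    · simp [hi]
    · exact PointedCone.smul_mem _ (hc i) (PointedCone.subset_hull (mem_image_of_mem a (hcs hi)))

end OrderedField

section TopologicalVectorSpace

variable {E ι : Type*} [AddCommGroup E] [Module ℝ E] [TopologicalSpace E] [IsTopologicalAddGroup E]
  [ContinuousSMul ℝ E] [T2Space E]

theorem PointedCone.isClosed_hull_range_of_linearIndependent {b : ι → E} [Fintype ι]
    (hb : LinearIndependent ℝ b) : IsClosed (PointedCone.hull ℝ (range b) : Set E) := by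
  have hcoe : (PointedCone.hull ℝ (range b) : Set E) =
      Fintype.linearCombination ℝ b '' Ici 0 := by
    ext x
    rw [← image_univ, SetLike.mem_coe, mem_hull_image_iff]
    simp [Fintype.linearCombination_apply, Pi.le_def]
  rw [hcoe]
  refine (LinearMap.isClosedEmbedding_of_injective ?_).isClosedMap _ isClosed_Ici
  exact LinearMap.ker_eq_bot.2 (linearIndependent_iff_injective_fintypeLinearCombination.1 hb)

variable [Fintype ι]

theorem PointedCone.isClosed_hull_image (a : ι → E) (s : Set ι) :
    IsClosed (PointedCone.hull ℝ (a '' s) : Set E) := by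
  classical
  have hunion : (PointedCone.hull ℝ (a '' s) : Set E) =
      ⋃ t ∈ {t | t ⊆ s ∧ LinearIndepOn ℝ a t}, PointedCone.hull ℝ (a '' t) := by
    refine Subset.antisymm (fun x hx => ?_) (iUnion₂_subset fun t ht => ?_)
    · obtain ⟨c, hc, hcs, rfl⟩ := mem_hull_image_iff.1 hx
      obtain ⟨c', hc', hsub, hind, hsum⟩ := exists_nonneg_repr_linearIndepOn a hc
      exact mem_biUnion ⟨hsub.trans hcs, hind⟩ (mem_hull_image_iff.2 ⟨c', hc', subset_rfl, hsum⟩)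
    · exact Submodule.span_mono (image_mono ht.1)
  rw [hunion]
  refine (toFinite _).isClosed_biUnion fun t ht => ?_
  rw [image_eq_range]
  exact isClosed_hull_range_of_linearIndependent ht.2

end TopologicalVectorSpace

section Bound

variable {E ι : Type*} [NormedAddCommGroup E] [NormedSpace ℝ E]

theorem LinearIndependent.exists_abs_le_mul_norm_sum [Fintype ι] {b : ι → E}
    (hb : LinearIndependent ℝ b) :
    ∃ K : ℝ, ∀ (c : ι → ℝ) (i : ι), |c i| ≤ K * ‖∑ j, c j • b j‖ := by
  obtain ⟨K, -, hK⟩ := (Fintype.linearCombination ℝ b).exists_antilipschitzWith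
    (LinearMap.ker_eq_bot.2 (linearIndependent_iff_injective_fintypeLinearCombination.1 hb))
  exact ⟨K, fun c i => (norm_le_pi_norm c i).trans (ZeroHomClass.bound_of_antilipschitz _ hK c)⟩

/-- The constant is uniform because only finitely many supports occur. -/
theorem exists_abs_le_mul_norm_sum_of_linearIndepOn [Fintype ι] (a : ι → E) :
    ∃ C ≥ 0, ∀ c : ι → ℝ, LinearIndepOn ℝ a (support c) →
      ∀ i, |c i| ≤ C * ‖∑ j, c j • a j‖ := by
  classical
  choose K hK using fun t : {t : Set ι // LinearIndepOn ℝ a t} =>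
    LinearIndependent.exists_abs_le_mul_norm_sum t.2
  obtain ⟨C, hC⟩ := Finite.exists_le K
  refine ⟨max C 0, le_max_right _ _, fun c hc i => ?_⟩
  by_cases hi : c i = 0
  · rw [hi, abs_zero]; positivity
  have hsum : ∑ j : support c, c j • a j = ∑ j, c j • a j := by
    rw [Finset.sum_set_coe (f := fun j => c j • a j)]
    exact Finset.sum_subset (Finset.subset_univ _) fun j _ hj => by
      rw [notMem_support.1 (by simpa using hj : j ∉ support c), zero_smul]
  calc |c i| ≤ K ⟨_, hc⟩ * ‖∑ j : support c, c j • a j‖ := hK ⟨_, hc⟩ (fun j => c j) ⟨i, hi⟩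
    _ ≤ max C 0 * ‖∑ j, c j • a j‖ := by
      rw [hsum]; gcongr; exact (hC _).trans (le_max_left _ _)

end Bound

section Hilbert

open Filter Topology
open scoped RealInnerProductSpace

variable {E ι : Type*} [NormedAddCommGroup E] [InnerProductSpace ℝ E]

theorem isClosed_setOf_forall_inner_le (a : ι → E) (d : ι → ℝ) :
    IsClosed {u : E | ∀ i, ⟪a i, u⟫ ≤ d i} := by
  simp only [ofPred_forall]
  exact isClosed_iInter fun i => isClosed_le (by fun_prop) continuous_const

theorem convex_setOf_forall_inner_le (a : ι → E) (d : ι → ℝ) :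
    Convex ℝ {u : E | ∀ i, ⟪a i, u⟫ ≤ d i} := by
  simp only [ofPred_forall]
  exact convex_iInter fun i => convex_halfSpace_le (innerₛₗ ℝ (a i)).isLinear (d i)

variable [Fintype ι]

theorem eventually_inner_add_smul_le {a : ι → E} {d : ι → ℝ} {x w : E}
    (hx : ∀ i, ⟪a i, x⟫ ≤ d i) (hw : ∀ i, ⟪a i, x⟫ = d i → ⟪a i, w⟫ ≤ 0) :
    ∀ᶠ t in 𝓝[>] (0 : ℝ), ∀ i, ⟪a i, x + t • w⟫ ≤ d i := by
  refine eventually_all.2 fun i => ?_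
  rcases (hx i).eq_or_lt with hact | hslack
  · filter_upwards [self_mem_nhdsWithin] with t (ht : 0 < t)
    rw [inner_add_right, inner_smul_right, hact]
    linarith [mul_nonpos_of_nonneg_of_nonpos ht.le (hw i hact)]
  · have hcont : Continuous fun t : ℝ => ⟪a i, x + t • w⟫ := by fun_prop
    have hlim : Tendsto (fun t : ℝ => ⟪a i, x + t • w⟫) (𝓝 0) (𝓝 ⟪a i, x⟫) :=
      hcont.tendsto' 0 _ (by simp)
    exact nhdsWithin_le_nhds (hlim.eventually (eventually_le_nhds hslack))

variable [CompleteSpace E]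

theorem mem_hull_active_of_inner_sub_nonpos {a : ι → E} {d : ι → ℝ} {x v : E}
    (hx : ∀ i, ⟪a i, x⟫ ≤ d i) (hv : ∀ u, (∀ i, ⟪a i, u⟫ ≤ d i) → ⟪v, u - x⟫ ≤ 0) :
    v ∈ PointedCone.hull ℝ (a '' {i | ⟪a i, x⟫ = d i}) := by
  by_contra hvC
  let C : ProperCone ℝ E := ⟨_, PointedCone.isClosed_hull_image a {i | ⟪a i, x⟫ = d i}⟩
  obtain ⟨y, hyC, hvy⟩ := C.hyperplane_separation' hvC
  have hdir : ∀ i, ⟪a i, x⟫ = d i → ⟪a i, -y⟫ ≤ 0 := fun i hi => by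
    rw [inner_neg_right, neg_nonpos]
    exact hyC _ (PointedCone.subset_hull (mem_image_of_mem a hi))
  -- `-y` is a feasible direction at `x` along which `⟪v, ·⟫` increases
  obtain ⟨t, ht, htpos⟩ :=
    ((eventually_inner_add_smul_le hx hdir).and self_mem_nhdsWithin).exists
  have := hv _ ht
  rw [add_sub_cancel_left, inner_smul_right, inner_neg_right] at this
  linarith [mul_pos htpos (neg_pos.2 hvy)]

theorem exists_hoffman_bound (a : ι → E) :
    ∃ σ ≥ 0, ∀ d : ι → ℝ, (∃ u, ∀ i, ⟪a i, u⟫ ≤ d i) → ∀ x : E, ∃ xs,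
      (∀ i, ⟪a i, xs⟫ ≤ d i) ∧ ‖x - xs‖ ≤ σ * ∑ i, max (⟪a i, x⟫ - d i) 0 := by
  obtain ⟨σ, hσ0, hσ⟩ := exists_abs_le_mul_norm_sum_of_linearIndepOn a
  refine ⟨σ, hσ0, fun d ⟨u, hu⟩ x => ?_⟩
  set L := {u : E | ∀ i, ⟪a i, u⟫ ≤ d i}
  obtain ⟨xs, hxs, hmin⟩ := exists_norm_eq_iInf_of_complete_convex (K := L) ⟨u, hu⟩
    (isClosed_setOf_forall_inner_le a d).isComplete (convex_setOf_forall_inner_le a d) x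
  have hnormal :=
    (norm_eq_iInf_iff_real_inner_le_zero (convex_setOf_forall_inner_le a d) hxs).1 hmin
  obtain ⟨c₀, hc₀, hc₀A, hc₀sum⟩ :=
    PointedCone.mem_hull_image_iff.1 (mem_hull_active_of_inner_sub_nonpos hxs hnormal)
  obtain ⟨c, hc, hcc₀, hind, hcsum⟩ := exists_nonneg_repr_linearIndepOn a hc₀
  rw [hc₀sum] at hcsum
  refine ⟨xs, hxs, ?_⟩
  set v := x - xs
  have hterm : ∀ i, c i * ⟪a i, v⟫ ≤ σ * ‖v‖ * max (⟪a i, x⟫ - d i) 0 := fun i => by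
    by_cases hi : c i = 0
    · rw [hi, zero_mul]; positivity
    have hact : ⟪a i, xs⟫ = d i := hc₀A (hcc₀ hi)
    calc c i * ⟪a i, v⟫ = c i * (⟪a i, x⟫ - d i) := by rw [inner_sub_right, hact]
      _ ≤ c i * max (⟪a i, x⟫ - d i) 0 := mul_le_mul_of_nonneg_left (le_max_left _ _) (hc i)
      _ ≤ σ * ‖v‖ * max (⟪a i, x⟫ - d i) 0 := by
        gcongr
        exact (le_abs_self _).trans (hcsum ▸ hσ c hind i)
  have hsq : ‖v‖ * ‖v‖ ≤ σ * (∑ i, max (⟪a i, x⟫ - d i) 0) * ‖v‖ := calc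
    ‖v‖ * ‖v‖ = ⟪∑ i, c i • a i, v⟫ := by rw [hcsum, real_inner_self_eq_norm_mul_norm]
    _ = ∑ i, c i * ⟪a i, v⟫ := by simp only [sum_inner, real_inner_smul_left]
    _ ≤ ∑ i, σ * ‖v‖ * max (⟪a i, x⟫ - d i) 0 := Finset.sum_le_sum fun i _ => hterm i
    _ = σ * (∑ i, max (⟪a i, x⟫ - d i) 0) * ‖v‖ := by rw [← Finset.mul_sum]; ring
  rcases (norm_nonneg v).eq_or_lt with hv | hv
  · rw [← hv]; positivity
  · exact le_of_mul_le_mul_right hsq hv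

end Hilbert

section MatrixForm

open scoped RealInnerProductSpace

theorem Matrix.fromRows_neg_mulVec_le_elim_neg_iff {R m n : Type*} [Ring R] [PartialOrder R]
    [IsOrderedAddMonoid R] [Fintype n] {B : Matrix m n R} {y : n → R} {e : m → R} :
    B.fromRows (-B) *ᵥ y ≤ Sum.elim e (-e) ↔ B *ᵥ y = e := by
  rw [fromRows_mulVec, Sum.elim_le_elim_iff, neg_mulVec, neg_le_neg_iff]
  exact ⟨fun h => le_antisymm h.1 h.2, fun h => ⟨h.le, h.ge⟩⟩

theorem Matrix.sum_max_fromRows_neg_mulVec_sub {R m n : Type*} [Ring R] [LinearOrder R]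
    [IsOrderedAddMonoid R] [Fintype m] [Fintype n] (B : Matrix m n R) (y : n → R) (e : m → R) :
    ∑ i, max ((B.fromRows (-B) *ᵥ y) i - Sum.elim e (-e) i) 0 = ∑ i, |(B *ᵥ y - e) i| := by
  simp only [fromRows_mulVec, neg_mulVec, Fintype.sum_sum_type, Sum.elim_inl, Sum.elim_inr,
    Pi.neg_apply, ← Finset.sum_add_distrib, Pi.sub_apply, ← max_zero_add_max_neg_zero_eq_abs_self]
  congr! 3
  abel

theorem l2norm_eq_norm_toLp {n : ℕ} (y : Fin n → ℝ) : l2norm y = ‖WithLp.toLp 2 y‖ := by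
  simp [l2norm, EuclideanSpace.norm_eq]

theorem Matrix.inner_toLp_row_toLp {m : Type*} {n : ℕ} (A : Matrix m (Fin n) ℝ) (i : m)
    (u : Fin n → ℝ) :
    ⟪WithLp.toLp 2 (A i), WithLp.toLp 2 u⟫ = (A *ᵥ u) i := by
  simp [EuclideanSpace.inner_toLp_toLp, mulVec, dotProduct_comm]

theorem Matrix.exists_hoffman_bound_mulVec_le {m : Type*} [Fintype m] {n : ℕ}
    (A : Matrix m (Fin n) ℝ) :
    ∃ σ ≥ 0, ∀ d : m → ℝ, (∃ u, A *ᵥ u ≤ d) → ∀ x, ∃ xs, A *ᵥ xs ≤ d ∧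
      l2norm (x - xs) ≤ σ * ∑ i, max ((A *ᵥ x) i - d i) 0 := by
  obtain ⟨σ, hσ0, hσ⟩ := exists_hoffman_bound fun i => WithLp.toLp 2 (A i)
  refine ⟨σ, hσ0, fun d ⟨u, hu⟩ x => ?_⟩
  obtain ⟨xs, hxs, hbound⟩ :=
    hσ d ⟨WithLp.toLp 2 u, fun i => (inner_toLp_row_toLp A i u).trans_le (hu i)⟩ (WithLp.toLp 2 x)
  refine ⟨xs.ofLp, fun i => (inner_toLp_row_toLp A i _).symm.trans_le (by simpa using hxs i), ?_⟩
  simpa [l2norm_eq_norm_toLp, inner_toLp_row_toLp] using hbound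

end MatrixForm

/-- Hoffman's error bound for linear systems (Robinson's form): there is a constant
`σ = σ(M¹, M²) ≥ 0` such that whenever the set
`L = {u : M¹ u ≤ d¹, M² u = d²}` is nonempty, every point `x` admits a point `x* ∈ L` with
`‖x − x*‖₂ ≤ σ (‖(M¹x − d¹)⁺‖₁ + ‖M²x − d²‖₁)`. -/
theorem hoffman_robinson_error_bound (m₁ m₂ ℓ : ℕ)
    (M1 : Matrix (Fin m₁) (Fin ℓ) ℝ) (M2 : Matrix (Fin m₂) (Fin ℓ) ℝ) :
    ∃ σ : ℝ, 0 ≤ σ ∧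
      ∀ (d1 : Fin m₁ → ℝ) (d2 : Fin m₂ → ℝ),
        (∃ u : Fin ℓ → ℝ, (∀ i, M1.mulVec u i ≤ d1 i) ∧ M2.mulVec u = d2) →
        ∀ x : Fin ℓ → ℝ, ∃ xs : Fin ℓ → ℝ,
          (∀ i, M1.mulVec xs i ≤ d1 i) ∧ M2.mulVec xs = d2 ∧
          l2norm (x - xs) ≤
            σ * (l1norm (fun i => max (M1.mulVec x i - d1 i) 0)
                  + l1norm (M2.mulVec x - d2)) := by
  obtain ⟨σ, hσ0, hσ⟩ := exists_hoffman_bound_mulVec_le (M1.fromRows (M2.fromRows (-M2)))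
  refine ⟨σ, hσ0, fun d1 d2 ⟨u, hu1, hu2⟩ x => ?_⟩
  have hsys : ∀ y, M1.fromRows (M2.fromRows (-M2)) *ᵥ y ≤ Sum.elim d1 (Sum.elim d2 (-d2)) ↔
      M1 *ᵥ y ≤ d1 ∧ M2 *ᵥ y = d2 := fun y => by
    rw [fromRows_mulVec, Sum.elim_le_elim_iff, fromRows_neg_mulVec_le_elim_neg_iff]
  obtain ⟨xs, hxs, hbound⟩ := hσ _ ⟨u, (hsys u).2 ⟨hu1, hu2⟩⟩ x
  obtain ⟨hxs1, hxs2⟩ := (hsys xs).1 hxs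
  refine ⟨xs, hxs1, hxs2, hbound.trans_eq ?_⟩
  rw [Fintype.sum_sum_type, fromRows_mulVec M1]
  simp only [Sum.elim_inl, Sum.elim_inr]
  rw [sum_max_fromRows_neg_mulVec_sub, l1norm, l1norm]
  simp only [abs_of_nonneg (le_max_right _ (0 : ℝ))]
end

section
/- Let φ be a norm on ℝ^q with φ(eᵢ) = 1 and φ*(eᵢ) = 1 for every standard basis vector eᵢ, with unit ball 𝔅^φ = {x ∈ ℝ^q : φ(x) ≤ 1}, and let ε > 0. Suppose Q = ⋂_{i=1}^{K} {x ∈ ℝ^q : (aⁱ)ᵀx ≤ 1} is a polytope defined by finitely many vectors a¹, …, a^K ∈ ℝ^q with φ*(aⁱ) = 1 for every i, and suppose 𝔅^φ ⊆ Q ⊆ (1+ε)·𝔅^φ. Then for every a* ∈ ℝ^q with φ(a*) = 1 there exists an index i ∈ {1, …, K} such that (a*)ᵀaⁱ ≥ 1/(1+ε). -/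
open Matrix Pointwise

/-- `φ` is a norm on `Fin q → ℝ`. -/
structure IsNorm {q : ℕ} (φ : (Fin q → ℝ) → ℝ) : Prop where
  nonneg : ∀ x, 0 ≤ φ x
  eq_zero_iff : ∀ x, φ x = 0 ↔ x = 0
  smul_eq : ∀ (c : ℝ) (x), φ (c • x) = |c| * φ x
  triangle : ∀ x y, φ (x + y) ≤ φ x + φ y

/-- The dual norm `φ*(u) = sup {uᵀx : φ(x) ≤ 1}`. -/
noncomputable def dualNorm {q : ℕ} (φ : (Fin q → ℝ) → ℝ) (u : Fin q → ℝ) : ℝ :=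
  sSup {t : ℝ | ∃ x : Fin q → ℝ, φ x ≤ 1 ∧ t = ∑ i, u i * x i}

/-- The `i`-th standard basis vector of `ℝ^q`. -/
def stdBasis {q : ℕ} (i : Fin q) : Fin q → ℝ := fun j => if j = i then 1 else 0

/-- Lemma 2.3: if a polytope `Q = ⋂ᵢ {x : (aⁱ)ᵀx ≤ 1}` with `φ*(aⁱ) = 1` satisfies
`𝔅^φ ⊆ Q ⊆ (1+ε)𝔅^φ`, then for every `a*` with `φ(a*) = 1` there is an index `i`
with `(a*)ᵀ aⁱ ≥ 1/(1+ε)`. -/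
theorem polytope_approx_support_halfspace (q K : ℕ)
    (φ : (Fin q → ℝ) → ℝ) (hφ : IsNorm φ)
    (hbasis : ∀ i : Fin q, φ (stdBasis i) = 1)
    (hdbasis : ∀ i : Fin q, dualNorm φ (stdBasis i) = 1)
    (ε : ℝ) (hε : 0 < ε)
    (a : Fin K → (Fin q → ℝ)) (ha : ∀ i, dualNorm φ (a i) = 1)
    (hBQ : {x : Fin q → ℝ | φ x ≤ 1} ⊆ {x : Fin q → ℝ | ∀ i, ∑ j, a i j * x j ≤ 1})
    (hQB : {x : Fin q → ℝ | ∀ i, ∑ j, a i j * x j ≤ 1} ⊆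
            (1 + ε) • {x : Fin q → ℝ | φ x ≤ 1}) :
    ∀ astar : Fin q → ℝ, φ astar = 1 →
      ∃ i : Fin K, (1 : ℝ) / (1 + ε) ≤ ∑ j, astar j * a i j := by
  intro astar hast
  by_contra hcon
  push_neg at hcon
  have hε1 : (0:ℝ) < 1 + ε := by linarith
  set s : Fin K → ℝ := fun i => ∑ j, astar j * a i j with hs
  obtain ⟨c, hc1, hc2⟩ : ∃ c : ℝ, 1 + ε < c ∧ ∀ i, c * s i ≤ 1 := by
    by_cases hK : Nonempty (Fin K)
    · haveI := hK
      set M := Finset.univ.sup' Finset.univ_nonempty s with hM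
      have hMlt : M < 1/(1+ε) := by
        rw [hM, Finset.sup'_lt_iff]
        exact fun i _ => hcon i
      by_cases hMpos : 0 < M
      · refine ⟨1/M, ?_, fun i => ?_⟩
        · rw [lt_div_iff₀ hMpos]
          calc (1+ε) * M < (1+ε) * (1/(1+ε)) := by
                exact mul_lt_mul_of_pos_left hMlt hε1
            _ = 1 := by field_simp
        · have hle : s i ≤ M := Finset.le_sup' s (Finset.mem_univ i)
          calc (1/M) * s i ≤ (1/M) * M := by
                apply mul_le_mul_of_nonneg_left hle
                positivity
            _ = 1 := by field_simp
      · push_neg at hMpos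
        refine ⟨2*(1+ε), by linarith, fun i => ?_⟩
        have hle : s i ≤ M := Finset.le_sup' s (Finset.mem_univ i)
        nlinarith
    · exact ⟨2*(1+ε), by linarith, fun i => absurd ⟨i⟩ hK⟩
  have hxQ : (c • astar) ∈ {x : Fin q → ℝ | ∀ i, ∑ j, a i j * x j ≤ 1} := by
    intro i
    have heq : ∑ j, a i j * (c • astar) j = c * s i := by
      simp only [Pi.smul_apply, smul_eq_mul, hs, Finset.mul_sum]
      exact Finset.sum_congr rfl fun j _ => by ring
    rw [heq]
    exact hc2 i
  obtain ⟨y, hy, hxy⟩ := hQB hxQ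
  have hφx : φ (c • astar) = c := by
    rw [hφ.smul_eq, hast, abs_of_pos (by linarith), mul_one]
  have hφx' : φ (c • astar) ≤ 1 + ε := by
    rw [← hxy, hφ.smul_eq, abs_of_pos hε1]
    have hy' : φ y ≤ 1 := hy
    nlinarith [hφ.nonneg y]
  linarith
end

section
/- Let φ̃ : ℝ^q → ℝ₊ be a finite convex function with φ̃(0) = 0 and φ̃(u) > 0 for u ≠ 0. Let A ∈ ℝ^{m×n} (m < n) and M ∈ ℝ^{m×q} (m ≤ q) be full-row-rank matrices. Suppose γ : ℝ₊ → ℝ₊ is a continuous function with γ(0) = 0 and γ(ε) > 0 for ε > 0, and suppose that for every ε ≥ 0 and every y ∈ ℝ^m there exist constants C'(y, ε) and C''(y, ε) such that: (i) every x ∈ ℝⁿ with φ̃(Mᵀ(Ax − y)) ≤ ε admits an optimal solution x* of the problem min{‖z‖₁ : φ̃(Mᵀ(Az − y)) ≤ ε} with ‖x − x*‖₂ ≤ C'(y, ε)·σ_k(x)₁ + C''(y, ε)·γ(ε); and (ii) for each fixed y, C''(y, ε)·γ(ε) → 0 as ε → 0⁺. Then Aᵀ satisfies the weak range space property (weak RSP)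 of order k. -/
open Matrix Filter Topology
open scoped Classical

/-- The best `k`-term approximation error
`σ_k(x)₁ = inf {‖x − u‖₁ : ‖u‖₀ ≤ k}`. -/
noncomputable def bestKTerm {n : ℕ} (k : ℕ) (x : Fin n → ℝ) : ℝ :=
  sInf {t : ℝ | ∃ u : Fin n → ℝ,
    (Finset.univ.filter (fun i => u i ≠ 0)).card ≤ k ∧ t = l1norm (x - u)}

/-- `Aᵀ` satisfies the weak range space property of order `k`. -/
def WeakRSP {m n : ℕ} (A : Matrix (Fin m) (Fin n) ℝ) (k : ℕ) : Prop :=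
  ∀ S₁ S₂ : Finset (Fin n), Disjoint S₁ S₂ → S₁.card + S₂.card ≤ k →
    ∃ u : Fin m → ℝ,
      (∀ i ∈ S₁, Aᵀ.mulVec u i = 1) ∧
      (∀ i ∈ S₂, Aᵀ.mulVec u i = -1) ∧
      (∀ i, i ∉ S₁ → i ∉ S₂ → |Aᵀ.mulVec u i| ≤ 1)

/-- value of the sublinear functional at a single -/
lemma p_single_aux {n : ℕ} (S₁ S₂ : Finset (Fin n)) (i : Fin n) (c : ℝ) :
    ∑ j, (if j ∈ S₁ then (Pi.single i c : Fin n → ℝ) j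
          else if j ∈ S₂ then -(Pi.single i c : Fin n → ℝ) j
          else |(Pi.single i c : Fin n → ℝ) j|)
      = if i ∈ S₁ then c else if i ∈ S₂ then -c else |c| := by
  rw [Finset.sum_eq_single i]
  · simp [Pi.single_eq_same]
  · intro j _ hj
    simp [Pi.single_eq_of_ne hj]
  · intro h; exact absurd (Finset.mem_univ i) h

theorem exists_dual_of_l1_min {m n : ℕ} (A : Matrix (Fin m) (Fin n) ℝ)
    (hsurj : LinearMap.range A.mulVecLin = ⊤)
    (S₁ S₂ : Finset (Fin n)) (hdisj : Disjoint S₁ S₂)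
    (hmin : ∀ h : Fin n → ℝ, A.mulVec h = 0 →
      l1norm (fun i => if i ∈ S₁ then (1:ℝ) else if i ∈ S₂ then -1 else 0)
        ≤ l1norm ((fun i => if i ∈ S₁ then (1:ℝ) else if i ∈ S₂ then -1 else 0) + h)) :
    ∃ u : Fin m → ℝ,
      (∀ i ∈ S₁, Aᵀ.mulVec u i = 1) ∧
      (∀ i ∈ S₂, Aᵀ.mulVec u i = -1) ∧
      (∀ i, i ∉ S₁ → i ∉ S₂ → |Aᵀ.mulVec u i| ≤ 1) := by
  classical
  set x : Fin n → ℝ := fun i => if i ∈ S₁ then 1 else if i ∈ S₂ then -1 else 0 with hxdef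
  set p : (Fin n → ℝ) → ℝ :=
    fun h => ∑ i, (if i ∈ S₁ then h i else if i ∈ S₂ then -h i else |h i|) with hpdef
  -- p is nonnegative on the kernel of A
  have hpK : ∀ h : Fin n → ℝ, A.mulVec h = 0 → 0 ≤ p h := by
    intro h hh
    set t : ℝ := (l1norm h + 1)⁻¹ with htdef
    have hl1 : 0 ≤ l1norm h := Finset.sum_nonneg fun i _ => abs_nonneg _
    have ht : 0 < t := by rw [htdef]; positivity
    have htc : t * (l1norm h + 1) = 1 := inv_mul_cancel₀ (by linarith)
    have hsmall : ∀ j, t * |h j| < 1 := by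
      intro j
      have h1 : |h j| ≤ l1norm h :=
        Finset.single_le_sum (fun i _ => abs_nonneg (h i)) (Finset.mem_univ j)
      nlinarith
    have hA : A.mulVec (t • h) = 0 := by rw [Matrix.mulVec_smul, hh, smul_zero]
    have hle := hmin (t • h) hA
    have hexp : l1norm (x + t • h) = l1norm x + t * p h := by
      unfold l1norm
      rw [hpdef, Finset.mul_sum, ← Finset.sum_add_distrib]
      apply Finset.sum_congr rfl
      intro i _
      have hsm := hsmall i
      have hub : t * h i < 1 := lt_of_le_of_lt (by nlinarith [le_abs_self (h i)]) hsm
      have hlb : -1 < t * h i := by nlinarith [neg_abs_le (h i)]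
      by_cases h1 : i ∈ S₁
      · have hx1 : x i = 1 := by simp [hxdef, h1]
        simp only [Pi.add_apply, Pi.smul_apply, smul_eq_mul, hx1, h1, if_pos]
        rw [abs_of_pos (by linarith), abs_one]
      · by_cases h2 : i ∈ S₂
        · have hx1 : x i = -1 := by simp [hxdef, h1, h2]
          simp only [Pi.add_apply, Pi.smul_apply, smul_eq_mul, hx1, h1, h2, if_neg, if_pos,
            if_false]
          rw [abs_of_neg (by linarith), abs_neg, abs_one]
          ring
        · have hx1 : x i = 0 := by simp [hxdef, h1, h2]
          simp only [Pi.add_apply, Pi.smul_apply, smul_eq_mul, hx1, h1, h2, if_neg, if_false]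
          rw [zero_add, abs_zero, zero_add, abs_mul, abs_of_pos ht]
    have h0 : 0 ≤ t * p h := by rw [hexp] at hle; linarith
    nlinarith
  -- p is sublinear
  have hhom : ∀ c : ℝ, 0 < c → ∀ v, p (c • v) = c * p v := by
    intro c hc v
    rw [hpdef, Finset.mul_sum]
    apply Finset.sum_congr rfl
    intro i _
    simp only [Pi.smul_apply, smul_eq_mul]
    by_cases h1 : i ∈ S₁
    · simp [h1]
    · by_cases h2 : i ∈ S₂
      · simp [h1, h2, mul_neg]
      · simp [h1, h2, abs_mul, abs_of_pos hc]
  have hadd : ∀ v w : Fin n → ℝ, p (v + w) ≤ p v + p w := by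
    intro v w
    rw [hpdef, ← Finset.sum_add_distrib]
    apply Finset.sum_le_sum
    intro i _
    by_cases h1 : i ∈ S₁
    · simp [h1]
    · by_cases h2 : i ∈ S₂
      · simp [h1, h2, neg_add]
      · simp only [Pi.add_apply, h1, h2, if_neg, if_false]
        exact abs_add_le _ _
  -- Hahn-Banach extension of 0 on ker A
  set f : ((Fin n → ℝ) →ₗ.[ℝ] ℝ) := ⟨LinearMap.ker A.mulVecLin, 0⟩ with hfdef
  obtain ⟨g, hg0, hgle⟩ := exists_extension_of_le_sublinear f p hhom hadd (by
    intro z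
    have hz : A.mulVec z.1 = 0 := z.2
    have hf : f z = 0 := rfl
    rw [hf]
    exact hpK z.1 hz)
  have hgK : ∀ v : Fin n → ℝ, A.mulVec v = 0 → g v = 0 := by
    intro v hv
    have hv' : v ∈ f.domain := by
      show v ∈ LinearMap.ker A.mulVecLin
      exact LinearMap.mem_ker.mpr hv
    exact hg0 ⟨v, hv'⟩
  -- factor g through A
  obtain ⟨B, hB⟩ := A.mulVecLin.exists_rightInverse_of_surjective hsurj
  set u : Fin m → ℝ := fun j => g (B (Pi.single j 1)) with hudef
  have hval : ∀ i, Aᵀ.mulVec u i = g (Pi.single i 1) := by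
    intro i
    have hBA : ∀ w : Fin m → ℝ, A.mulVec (B w) = w := by
      intro w
      have := congrArg (fun (F : (Fin m → ℝ) →ₗ[ℝ] (Fin m → ℝ)) => F w) hB
      simpa using this
    have hker : A.mulVec ((Pi.single i 1 : Fin n → ℝ)
        - B (A.mulVec (Pi.single i 1))) = 0 := by
      have : A.mulVecLin ((Pi.single i 1 : Fin n → ℝ)
          - B (A.mulVec (Pi.single i 1))) = 0 := by
        rw [map_sub]
        show A.mulVec _ - A.mulVecLin _ = 0
        rw [show A.mulVecLin (B (A.mulVec (Pi.single i 1)))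
            = A.mulVec (B (A.mulVec (Pi.single i 1))) from rfl, hBA, sub_self]
      exact this
    have h1 : g (Pi.single i 1) = g (B (A.mulVec (Pi.single i 1))) := by
      have h2 := hgK _ hker
      rw [map_sub] at h2
      linarith
    rw [h1]
    have h3 := LinearMap.pi_apply_eq_sum_univ (g.comp B) (A.mulVec (Pi.single i 1))
    simp only [LinearMap.comp_apply] at h3
    rw [h3]
    rw [show (Matrix.mulVec Aᵀ u) i = ∑ j, A j i * u j from by
      simp [Matrix.mulVec, dotProduct, Matrix.transpose_apply]]
    apply Finset.sum_congr rfl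
    intro j _
    have hsingle : (fun j' => if j = j' then (1:ℝ) else 0) = Pi.single j 1 := by
      funext j'
      rw [Pi.single_apply]
      by_cases h : j = j' <;> simp [h, eq_comm]
    rw [hsingle, Matrix.mulVec_single, smul_eq_mul]
    simp [hudef]
  -- compute the bounds
  have hneg : ∀ i : Fin n, (Pi.single i (-1:ℝ) : Fin n → ℝ) = -Pi.single i 1 := by
    intro i
    funext j
    by_cases h : j = i
    · subst h; simp
    · simp [Pi.single_eq_of_ne h]
  have hb : ∀ (i : Fin n) (c : ℝ), g (Pi.single i c)
      ≤ if i ∈ S₁ then c else if i ∈ S₂ then -c else |c| := by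
    intro i c
    have := hgle (Pi.single i c)
    rw [hpdef] at this
    exact this.trans_eq (p_single_aux S₁ S₂ i c)
  refine ⟨u, ?_, ?_, ?_⟩
  · intro i hi
    rw [hval i]
    have h1 := hb i 1
    have h2 := hb i (-1)
    rw [hneg i, map_neg] at h2
    rw [if_pos hi] at h1
    rw [if_pos hi] at h2
    linarith
  · intro i hi
    have hi1 : i ∉ S₁ := Finset.disjoint_right.mp hdisj hi
    rw [hval i]
    have h1 := hb i 1
    have h2 := hb i (-1)
    rw [hneg i, map_neg] at h2
    rw [if_neg hi1, if_pos hi] at h1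
    rw [if_neg hi1, if_pos hi] at h2
    linarith
  · intro i hi1 hi2
    rw [hval i]
    have h1 := hb i 1
    have h2 := hb i (-1)
    rw [hneg i, map_neg] at h2
    rw [if_neg hi1, if_neg hi2, abs_one] at h1
    rw [if_neg hi1, if_neg hi2, abs_neg, abs_one] at h2
    exact abs_le.mpr ⟨by linarith, h1⟩

/-- Theorem 2.7: if for every error level `ε ≥ 0` and every measurement `y` any vector
obeying `φ̃(Mᵀ(Ax − y)) ≤ ε` can be approximated by an optimal solution of
`min {‖z‖₁ : φ̃(Mᵀ(Az − y)) ≤ ε}` with error `C'(y,ε) σ_k(x)₁ + C''(y,ε) γ(ε)`,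
where `C''(y,ε) γ(ε) → 0` as `ε → 0⁺`, then `Aᵀ` satisfies the weak RSP of order `k`. -/
theorem weakRSP_necessary_for_stability
    (m n q k : ℕ) (hmn : m < n) (hmq : m ≤ q)
    (A : Matrix (Fin m) (Fin n) ℝ) (M : Matrix (Fin m) (Fin q) ℝ)
    (hArank : A.rank = m) (hMrank : M.rank = m)
    (φ : (Fin q → ℝ) → ℝ)
    (hconv : ConvexOn ℝ Set.univ φ)
    (hnonneg : ∀ u, 0 ≤ φ u) (hzero : φ 0 = 0) (hpos : ∀ u, u ≠ 0 → 0 < φ u)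
    (γ : ℝ → ℝ) (hγcont : Continuous γ) (hγ0 : γ 0 = 0) (hγpos : ∀ ε : ℝ, 0 < ε → 0 < γ ε)
    (C' C'' : (Fin m → ℝ) → ℝ → ℝ)
    (hrecover : ∀ (y : Fin m → ℝ) (ε : ℝ), 0 ≤ ε →
      ∀ x : Fin n → ℝ, φ (Mᵀ.mulVec (A.mulVec x - y)) ≤ ε →
        ∃ xs : Fin n → ℝ,
          (φ (Mᵀ.mulVec (A.mulVec xs - y)) ≤ ε ∧
            ∀ z : Fin n → ℝ, φ (Mᵀ.mulVec (A.mulVec z - y)) ≤ ε →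
              l1norm xs ≤ l1norm z) ∧
          l2norm (x - xs) ≤ C' y ε * bestKTerm k x + C'' y ε * γ ε)
    (hlimit : ∀ y : Fin m → ℝ,
      Tendsto (fun ε => C'' y ε * γ ε) (nhdsWithin 0 (Set.Ioi 0)) (nhds 0)) :
    WeakRSP A k := by
  intro S₁ S₂ hdisj hcard
  classical
  set x : Fin n → ℝ := fun i => if i ∈ S₁ then 1 else if i ∈ S₂ then -1 else 0 with hxdef
  set y : Fin m → ℝ := A.mulVec x with hy
  have hx0 : φ (Mᵀ.mulVec (A.mulVec x - y)) ≤ 0 := by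
    rw [hy, sub_self, Matrix.mulVec_zero, hzero]
  obtain ⟨xs, ⟨hxsfeas, hxsopt⟩, hdist⟩ := hrecover y 0 le_rfl x hx0
  -- bestKTerm k x = 0
  have hsigma : bestKTerm k x = 0 := by
    have hmem : (0:ℝ) ∈ {t : ℝ | ∃ u : Fin n → ℝ,
        (Finset.univ.filter (fun i => u i ≠ 0)).card ≤ k ∧ t = l1norm (x - u)} := by
      refine ⟨x, ?_, by simp [l1norm]⟩
      have hsub : (Finset.univ.filter (fun i => x i ≠ 0)) ⊆ S₁ ∪ S₂ := by
        intro i hi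
        rw [Finset.mem_filter] at hi
        by_contra hiu
        rw [Finset.mem_union] at hiu
        push_neg at hiu
        exact hi.2 (by simp [hxdef, hiu.1, hiu.2])
      calc (Finset.univ.filter (fun i => x i ≠ 0)).card ≤ (S₁ ∪ S₂).card :=
            Finset.card_le_card hsub
        _ ≤ S₁.card + S₂.card := Finset.card_union_le _ _
        _ ≤ k := hcard
    have hlb : ∀ t ∈ {t : ℝ | ∃ u : Fin n → ℝ,
        (Finset.univ.filter (fun i => u i ≠ 0)).card ≤ k ∧ t = l1norm (x - u)}, (0:ℝ) ≤ t := by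
      rintro t ⟨u, _, rfl⟩
      exact Finset.sum_nonneg fun i _ => abs_nonneg _
    exact le_antisymm (csInf_le ⟨0, hlb⟩ hmem) (le_csInf ⟨0, hmem⟩ hlb)
  have hd0 : l2norm (x - xs) ≤ 0 := by
    rw [hsigma, hγ0] at hdist
    simpa using hdist
  have hxxs : x = xs := by
    have hs : Real.sqrt (∑ i, (x i - xs i) ^ 2) = 0 :=
      le_antisymm hd0 (Real.sqrt_nonneg _)
    have hsum : ∑ i, (x i - xs i) ^ 2 = 0 := by
      have h1 := Real.sqrt_eq_zero'.mp hs
      have h2 : 0 ≤ ∑ i, (x i - xs i) ^ 2 := Finset.sum_nonneg fun i _ => sq_nonneg _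
      linarith
    funext i
    have := (Finset.sum_eq_zero_iff_of_nonneg (fun i _ => sq_nonneg (x i - xs i))).mp
      hsum i (Finset.mem_univ i)
    have := pow_eq_zero_iff (n := 2) (by norm_num) |>.mp this
    linarith [sub_eq_zero.mp this]
  -- x is an l1 minimizer over the kernel
  have hmin : ∀ h : Fin n → ℝ, A.mulVec h = 0 → l1norm x ≤ l1norm (x + h) := by
    intro h hh
    have hfeas : φ (Mᵀ.mulVec (A.mulVec (x + h) - y)) ≤ 0 := by
      rw [Matrix.mulVec_add, hh, add_zero, hy, sub_self, Matrix.mulVec_zero, hzero]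
    have := hxsopt (x + h) hfeas
    rwa [← hxxs] at this
  -- surjectivity of A
  have hsurj : LinearMap.range A.mulVecLin = ⊤ := by
    apply Submodule.eq_top_of_finrank_eq
    have hr : A.rank = Module.finrank ℝ (LinearMap.range A.mulVecLin) := rfl
    rw [← hr, hArank]
    simp
  exact exists_dual_of_l1_min A hsurj S₁ S₂ hdisj hmin
end

section
/- Let A ∈ ℝ^{m×n}, M ∈ ℝ^{m×q}, y ∈ ℝ^m, τ ≥ 0 and α ∈ [0,1], and for x ∈ ℝⁿ write ϑ(x) = Mᵀ(Ax − y). Then x* ∈ ℝⁿ is an optimal solution of the Dantzig selector problem min{‖x‖₁ : α‖Mᵀ(Ax − y)‖_∞ + (1−α)‖Mᵀ(Ax − y)‖₁ ≤ τ} if and only if there exist vectors t ∈ ℝⁿ, ξ ∈ ℝ, v ∈ ℝ^q and w⁽¹⁾, w⁽²⁾ ∈ ℝⁿ, w⁽³⁾ ∈ ℝ, w⁽⁴⁾, w⁽⁵⁾, w⁽⁶⁾, w⁽⁷⁾ ∈ ℝ^q, all with nonnegative components (t ≥ 0, ξ ≥ 0, v ≥ 0, w⁽ⁱ⁾ ≥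 0 for i = 1, …, 7), such that: x* ≤ t, −x* ≤ t, αξ + (1−α)eᵀv ≤ τ, −ξe ≤ ϑ(x*) ≤ ξe, ϑ(x*) ≤ v, −ϑ(x*) ≤ v, −w⁽¹⁾ + w⁽²⁾ + AᵀM(w⁽⁴⁾ − w⁽⁵⁾ − w⁽⁶⁾ + w⁽⁷⁾) = 0, w⁽¹⁾ + w⁽²⁾ ≤ ẽ, −αw⁽³⁾ + eᵀw⁽⁴⁾ + eᵀw⁽⁵⁾ ≤ 0, −(1−α)w⁽³⁾e + w⁽⁶⁾ + w⁽⁷⁾ ≤ 0, and −τw⁽³⁾ + yᵀM(w⁽⁴⁾ − w⁽⁵⁾ − w⁽⁶⁾ + w⁽⁷⁾) = ẽᵀt. Moreover, any such tuple satisfies t = |x*|, ξ ≥ ‖ϑ(x*)‖_∞ and v ≥ |ϑ(x*)| componentwise. -/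
open Matrix

/-- The ℓ_∞ norm on `Fin n → ℝ`. -/
noncomputable def linfnorm {n : ℕ} (x : Fin n → ℝ) : ℝ := ⨆ i, |x i|

/-- The residual `ϑ(x) = Mᵀ(Ax − y)`. -/
noncomputable def resid {m n q : ℕ} (A : Matrix (Fin m) (Fin n) ℝ)
    (M : Matrix (Fin m) (Fin q) ℝ) (y : Fin m → ℝ) (x : Fin n → ℝ) : Fin q → ℝ :=
  Mᵀ.mulVec (A.mulVec x - y)

/-- The KKT system (3.9) for the Dantzig selector with mixed ℓ_∞/ℓ₁ constraint. -/
def KKTsysDS {m n q : ℕ} (A : Matrix (Fin m) (Fin n) ℝ) (M : Matrix (Fin m) (Fin q) ℝ)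
    (y : Fin m → ℝ) (τ α : ℝ) (x t : Fin n → ℝ) (ξ : ℝ) (v : Fin q → ℝ)
    (w1 w2 : Fin n → ℝ) (w3 : ℝ) (w4 w5 w6 w7 : Fin q → ℝ) : Prop :=
  (∀ i, x i ≤ t i) ∧ (∀ i, -x i ≤ t i) ∧
  α * ξ + (1 - α) * (∑ i, v i) ≤ τ ∧
  (∀ i, -ξ ≤ resid A M y x i) ∧ (∀ i, resid A M y x i ≤ ξ) ∧
  (∀ i, resid A M y x i ≤ v i) ∧ (∀ i, -resid A M y x i ≤ v i) ∧
  -w1 + w2 + Aᵀ.mulVec (M.mulVec (w4 - w5 - w6 + w7)) = 0 ∧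
  (∀ i, w1 i + w2 i ≤ 1) ∧
  -(α * w3) + (∑ i, w4 i) + (∑ i, w5 i) ≤ 0 ∧
  (∀ i, -((1 - α) * w3) + w6 i + w7 i ≤ 0) ∧
  -(τ * w3) + y ⬝ᵥ M.mulVec (w4 - w5 - w6 + w7) = ∑ i, t i ∧
  (∀ i, 0 ≤ t i) ∧ 0 ≤ ξ ∧ (∀ i, 0 ≤ v i) ∧
  (∀ i, 0 ≤ w1 i) ∧ (∀ i, 0 ≤ w2 i) ∧ 0 ≤ w3 ∧
  (∀ i, 0 ≤ w4 i) ∧ (∀ i, 0 ≤ w5 i) ∧ (∀ i, 0 ≤ w6 i) ∧ (∀ i, 0 ≤ w7 i)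

/-! The problem is equivalent to the linear program in `(x, t, ξ, v)`

  `min ∑ tᵢ  s.t.  ±x ≤ t,  αξ + (1 - α) ∑ vᵢ ≤ τ,  ±ϑ(x) ≤ ξ,  ±ϑ(x) ≤ v`,

whose optimal points over a given `x` are `t = |x|`, `ξ = ‖ϑ(x)‖_∞`, `v = |ϑ(x)|`, and the KKT
system is the optimality certificate of that program: `w⁽¹⁾, …, w⁽⁷⁾` are the multipliers of
its seven families of constraints. Necessity is LP strong duality, obtained from the
Farkas–Bartl lemma by homogenization; sufficiency is weak duality. -/

section Farkas

variable {K V : Type*} [Field K] [LinearOrder K] [IsStrictOrderedRing K]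
  [AddCommGroup V] [Module K V]

/-- The Farkas–Bartl lemma. -/
theorem exists_nonneg_eq_sum_smul_of_forall_le_zero {ι : Type*} [Fintype ι]
    (L : ι → V →ₗ[K] K) (c : V →ₗ[K] K) (h : ∀ x, (∀ i, L i x ≤ 0) → c x ≤ 0) :
    ∃ u : ι → K, 0 ≤ u ∧ c = ∑ i, u i • L i := by
  revert L c
  refine Fintype.induction_empty_option (P := fun ι _ => ∀ (L : ι → V →ₗ[K] K) (c : V →ₗ[K] K),
    (∀ x, (∀ i, L i x ≤ 0) → c x ≤ 0) → ∃ u : ι → K, 0 ≤ u ∧ c = ∑ i, u i • L i) ?_ ?_ ?_ ι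
  · intro α β _ e ih L c h
    let := Fintype.ofEquiv β e.symm
    obtain ⟨u, hu, rfl⟩ := ih (L ∘ e) c fun x hx => h x fun b => by simpa using hx (e.symm b)
    refine ⟨u ∘ e.symm, fun b => hu _, ?_⟩
    rw [← e.sum_comp]
    simp
  · intro L c h
    refine ⟨0, le_rfl, LinearMap.ext fun x => le_antisymm (h x nofun) ?_⟩
    simpa using h (-x) nofun
  · intro α _ ih L c h
    by_cases hc : ∀ x, (∀ i, L (some i) x ≤ 0) → c x ≤ 0
    · obtain ⟨u, hu, rfl⟩ := ih (fun i => L (some i)) c hc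
      refine ⟨fun o => o.elim 0 u, ?_, by simp [Fintype.sum_option]⟩
      rintro (_ | i)
      exacts [le_rfl, hu i]
    push Not at hc
    obtain ⟨y, hy, hcy⟩ := hc
    have hLy : 0 < L none y := by
      by_contra! hLy
      exact hcy.not_ge (h y (by rintro (_ | i); exacts [hLy, hy i]))
    set z := (L none y)⁻¹ • y
    have hz : L none z = 1 := by simp [z, hLy.ne']
    have hzs : ∀ i, L (some i) z ≤ 0 := fun i => by
      simpa [z] using mul_nonpos_of_nonneg_of_nonpos (inv_nonneg.2 hLy.le) (hy i)
    have hcz : 0 < c z := by simpa [z] using mul_pos (inv_pos.2 hLy) hcy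
    -- project along `z` onto the hyperplane `L none = 0` and apply the induction hypothesis there
    obtain ⟨u, hu, hcu⟩ := ih (fun i => L (some i) - L (some i) z • L none)
      (c - c z • L none) fun x hx => by
        have := h (x - L none x • z) (by
          rintro (_ | i)
          · simp [hz]
          · simpa [mul_comm] using hx i)
        simpa [mul_comm] using this
    have hsum : ∑ i, u i * L (some i) z ≤ 0 :=
      Finset.sum_nonpos fun i _ => mul_nonpos_of_nonneg_of_nonpos (hu i) (hzs i)
    refine ⟨fun o => o.elim (c z - ∑ i, u i * L (some i) z) u, ?_, ?_⟩
    · rintro (_ | i)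
      · simp only [Pi.zero_apply, Option.elim_none]
        linarith
      · exact hu i
    · rw [Fintype.sum_option]
      nth_rw 1 [sub_eq_iff_eq_add.1 hcu]
      simp only [Option.elim_none, Option.elim_some, smul_sub, Finset.sum_sub_distrib, smul_smul,
        ← Finset.sum_smul]
      module

/-- Strong duality for the linear program `min c x` subject to `L i x ≤ b i`. -/
theorem exists_nonneg_dual_certificate {ι : Type*} [Fintype ι] (L : ι → V →ₗ[K] K)
    (b : ι → K) (c : V →ₗ[K] K) {x₀ : V} (hx₀ : ∀ i, L i x₀ ≤ b i)
    (hmin : ∀ x, (∀ i, L i x ≤ b i) → c x₀ ≤ c x) :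
    ∃ u : ι → K, 0 ≤ u ∧ (∀ x, c x + ∑ i, u i * L i x = 0) ∧ c x₀ + ∑ i, u i * b i = 0 := by
  -- homogenize: `(x, s)` with `s > 0` stands for the point `s⁻¹ • x`
  let L' : Option ι → V × K →ₗ[K] K := fun o =>
    o.elim (-LinearMap.snd K V K) fun i => L i ∘ₗ LinearMap.fst K V K - b i • LinearMap.snd K V K
  let c' : V × K →ₗ[K] K := c x₀ • LinearMap.snd K V K - c ∘ₗ LinearMap.fst K V K
  have hL'none (p : V × K) : L' none p = -p.2 := rfl
  have hL'some (i : ι) (p : V × K) : L' (some i) p = L i p.1 - b i * p.2 := rfl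
  have hc' (p : V × K) : c' p = c x₀ * p.2 - c p.1 := rfl
  obtain ⟨u, hu, hcu⟩ := exists_nonneg_eq_sum_smul_of_forall_le_zero L' c' <| by
    rintro ⟨x, s⟩ hxs
    have hs : 0 ≤ s := by linarith [hxs none, hL'none (x, s)]
    have hx : ∀ i, L i x ≤ s * b i := fun i => by linarith [hxs (some i), hL'some i (x, s)]
    suffices s * c x₀ ≤ c x by linarith [hc' (x, s)]
    rcases hs.lt_or_eq with hs | rfl
    · have := hmin (s⁻¹ • x) fun i => by
        rw [map_smul, smul_eq_mul, inv_mul_le_iff₀ hs]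
        exact hx i
      rwa [map_smul, smul_eq_mul, le_inv_mul_iff₀ hs] at this
    · -- `x` is a recession direction of the feasible set
      have := hmin (x₀ + x) fun i => by linarith [map_add (L i) x₀ x, hx₀ i, hx i]
      linarith [map_add c x₀ x]
  have hdir (x : V) : -c x = ∑ i, u (some i) * L i x := by
    simpa [hc', hL'none, hL'some, Fintype.sum_option] using LinearMap.congr_fun hcu (x, 0)
  have hgap : c x₀ = -u none - ∑ i, u (some i) * b i := by
    simpa [hc', hL'none, hL'some, Fintype.sum_option, sub_eq_add_neg] using
      LinearMap.congr_fun hcu (0, 1)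
  have hx (x : V) : c x + ∑ i, u (some i) * L i x = 0 := by linarith [hdir x]
  refine ⟨u ∘ some, fun i => hu _, hx, ?_⟩
  show c x₀ + ∑ i, u (some i) * b i = 0
  have := Finset.sum_le_sum fun i (_ : i ∈ Finset.univ) =>
    mul_le_mul_of_nonneg_left (hx₀ i) (hu (some i))
  linarith [hx x₀, show 0 ≤ u none from hu none]

end Farkas

section Norms

variable {k : ℕ}

lemma linfnorm_nonneg (x : Fin k → ℝ) : 0 ≤ linfnorm x :=
  Real.iSup_nonneg fun _ => abs_nonneg _

lemma abs_le_linfnorm (x : Fin k → ℝ) (i : Fin k) : |x i| ≤ linfnorm x :=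
  le_ciSup (f := fun i => |x i|) (Set.finite_range _).bddAbove i

lemma linfnorm_le {x : Fin k → ℝ} {a : ℝ} (ha : 0 ≤ a) (h : ∀ i, |x i| ≤ a) : linfnorm x ≤ a :=
  Real.iSup_le h ha

lemma l1norm_nonneg (x : Fin k → ℝ) : 0 ≤ l1norm x :=
  Finset.sum_nonneg fun _ _ => abs_nonneg _

lemma l1norm_le_sum {x t : Fin k → ℝ} (h : ∀ i, |x i| ≤ t i) : l1norm x ≤ ∑ i, t i :=
  Finset.sum_le_sum fun i _ => h i

lemma mixedNorm_le {r v : Fin k → ℝ} {ξ α : ℝ} (hα0 : 0 ≤ α) (hα1 : α ≤ 1) (hξ : 0 ≤ ξ)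
    (hrξ : ∀ i, |r i| ≤ ξ) (hrv : ∀ i, |r i| ≤ v i) :
    α * linfnorm r + (1 - α) * l1norm r ≤ α * ξ + (1 - α) * ∑ i, v i :=
  add_le_add (mul_le_mul_of_nonneg_left (linfnorm_le hξ hrξ) hα0)
    (mul_le_mul_of_nonneg_left (l1norm_le_sum hrv) (sub_nonneg.2 hα1))

end Norms

namespace DantzigSelector

variable {m n q : ℕ} (A : Matrix (Fin m) (Fin n) ℝ) (M : Matrix (Fin m) (Fin q) ℝ)
  (y : Fin m → ℝ) (τ α : ℝ)

def Feasible (x : Fin n → ℝ) : Prop :=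
  α * linfnorm (resid A M y x) + (1 - α) * l1norm (resid A M y x) ≤ τ

lemma resid_apply (x : Fin n → ℝ) (i : Fin q) :
    resid A M y x i = (Mᵀ * A) i ⬝ᵥ x - (Mᵀ *ᵥ y) i := by
  rw [resid, mulVec_sub, mulVec_mulVec]
  rfl

/-- Points `(x, t, ξ, v)` of the linear program. -/
abbrev LPVar (n q : ℕ) := (Fin n → ℝ) × (Fin n → ℝ) × ℝ × (Fin q → ℝ)

def lpForm (a b : Fin n → ℝ) (c : ℝ) (d : Fin q → ℝ) : LPVar n q →ₗ[ℝ] ℝ where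
  toFun p := a ⬝ᵥ p.1 + b ⬝ᵥ p.2.1 + c * p.2.2.1 + d ⬝ᵥ p.2.2.2
  map_add' p p' := by
    simp only [Prod.fst_add, Prod.snd_add, dotProduct_add]
    ring
  map_smul' r p := by
    simp only [Prod.smul_fst, Prod.smul_snd, dotProduct_smul, smul_eq_mul, RingHom.id_apply]
    ring

@[simp]
lemma lpForm_apply (a b : Fin n → ℝ) (c : ℝ) (d : Fin q → ℝ) (p : LPVar n q) :
    lpForm a b c d p = a ⬝ᵥ p.1 + b ⬝ᵥ p.2.1 + c * p.2.2.1 + d ⬝ᵥ p.2.2.2 :=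
  rfl

def lpObj : LPVar n q →ₗ[ℝ] ℝ := lpForm 0 1 0 0

lemma lpObj_apply (p : LPVar n q) : lpObj p = ∑ i, p.2.1 i := by
  simp [lpObj, one_dotProduct]

lemma lpObj_add_lpForm (a b : Fin n → ℝ) (c : ℝ) (d : Fin q → ℝ) (p : LPVar n q) :
    lpObj p + lpForm a b c d p = lpForm a (1 + b) c d p := by
  simp only [lpObj, lpForm_apply, add_dotProduct, zero_dotProduct, zero_mul]
  ring

lemma lpForm_eq_zero {a b : Fin n → ℝ} {c : ℝ} {d : Fin q → ℝ}
    (h : ∀ p, lpForm a b c d p = 0) : a = 0 ∧ b = 0 ∧ c = 0 ∧ d = 0 := by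
  refine ⟨funext fun j => ?_, funext fun j => ?_, ?_, funext fun i => ?_⟩
  · simpa using h (Pi.single j 1, 0, 0, 0)
  · simpa using h (0, Pi.single j 1, 0, 0)
  · simpa using h (0, 0, 1, 0)
  · simpa using h (0, 0, 0, Pi.single i 1)

abbrev LPIndex (n q : ℕ) := Fin n ⊕ Fin n ⊕ Unit ⊕ Fin q ⊕ Fin q ⊕ Fin q ⊕ Fin q

/-- The constraints `lpRow r p ≤ lpBound r`, in the order of the KKT multipliers `w⁽¹⁾, …, w⁽⁷⁾`:
`x - t ≤ 0`, `-x - t ≤ 0`, `αξ + (1 - α) ∑ v ≤ τ`, `-ϑ(x) - ξ ≤ 0`, `ϑ(x) - ξ ≤ 0`,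
`ϑ(x) - v ≤ 0`, `-ϑ(x) - v ≤ 0`, with the constant part `-Mᵀy` of `ϑ` moved to the right. -/
def lpRow : LPIndex n q → LPVar n q →ₗ[ℝ] ℝ
  | .inl j => lpForm (Pi.single j 1) (-Pi.single j 1) 0 0
  | .inr (.inl j) => lpForm (-Pi.single j 1) (-Pi.single j 1) 0 0
  | .inr (.inr (.inl _)) => lpForm 0 0 α ((1 - α) • 1)
  | .inr (.inr (.inr (.inl i))) => lpForm (-(Mᵀ * A) i) 0 (-1) 0
  | .inr (.inr (.inr (.inr (.inl i)))) => lpForm ((Mᵀ * A) i) 0 (-1) 0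
  | .inr (.inr (.inr (.inr (.inr (.inl i))))) => lpForm ((Mᵀ * A) i) 0 0 (-Pi.single i 1)
  | .inr (.inr (.inr (.inr (.inr (.inr i))))) => lpForm (-(Mᵀ * A) i) 0 0 (-Pi.single i 1)

def lpBound : LPIndex n q → ℝ :=
  Sum.elim 0 <| Sum.elim 0 <| Sum.elim (fun _ => τ) <|
    Sum.elim (-(Mᵀ *ᵥ y)) <| Sum.elim (Mᵀ *ᵥ y) <| Sum.elim (Mᵀ *ᵥ y) (-(Mᵀ *ᵥ y))

def LPFeasible (p : LPVar n q) : Prop := ∀ r, lpRow A M α r p ≤ lpBound M y τ r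

def lpMult (w1 w2 : Fin n → ℝ) (w3 : ℝ) (w4 w5 w6 w7 : Fin q → ℝ) : LPIndex n q → ℝ :=
  Sum.elim w1 <| Sum.elim w2 <| Sum.elim (fun _ => w3) <| Sum.elim w4 <| Sum.elim w5 <|
    Sum.elim w6 w7

noncomputable def lift (x : Fin n → ℝ) : LPVar n q :=
  (x, fun i => |x i|, linfnorm (resid A M y x), fun i => |resid A M y x i|)

variable {A M y τ α}

lemma lpFeasible_iff {x t : Fin n → ℝ} {ξ : ℝ} {v : Fin q → ℝ} :
    LPFeasible A M y τ α (x, t, ξ, v) ↔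
      (∀ i, x i ≤ t i) ∧ (∀ i, -x i ≤ t i) ∧ α * ξ + (1 - α) * (∑ i, v i) ≤ τ ∧
      (∀ i, -ξ ≤ resid A M y x i) ∧ (∀ i, resid A M y x i ≤ ξ) ∧
      (∀ i, resid A M y x i ≤ v i) ∧ (∀ i, -resid A M y x i ≤ v i) := by
  simp only [LPFeasible, Sum.forall, Unique.forall_iff, resid_apply]
  refine and_congr (forall_congr' fun j => ?_) <| and_congr (forall_congr' fun j => ?_) <|
    and_congr ?_ <| and_congr (forall_congr' fun i => ?_) <|
    and_congr (forall_congr' fun i => ?_) <|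
    and_congr (forall_congr' fun i => ?_) (forall_congr' fun i => ?_)
  all_goals
    simp only [lpRow, lpBound, lpForm_apply, Sum.elim_inl, Sum.elim_inr, single_dotProduct,
      neg_dotProduct, zero_dotProduct, smul_dotProduct, one_dotProduct, smul_eq_mul, Pi.neg_apply,
      Pi.zero_apply]
    constructor <;> intro <;> linarith

lemma lpFeasible_lift {x : Fin n → ℝ} (hx : Feasible A M y τ α x) :
    LPFeasible A M y τ α (lift A M y x) :=
  lpFeasible_iff.2 ⟨fun _ => le_abs_self _, fun _ => neg_le_abs _, hx,
    fun i => neg_le_of_abs_le (abs_le_linfnorm _ i), fun i => le_of_abs_le (abs_le_linfnorm _ i),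
    fun _ => le_abs_self _, fun _ => neg_le_abs _⟩

lemma feasible_of_lpFeasible (hα0 : 0 ≤ α) (hα1 : α ≤ 1) (hτ : 0 ≤ τ) {x t : Fin n → ℝ}
    {ξ : ℝ} {v : Fin q → ℝ} (hp : LPFeasible A M y τ α (x, t, ξ, v)) : Feasible A M y τ α x := by
  obtain ⟨-, -, hτ', hξl, hξu, hvu, hvl⟩ := lpFeasible_iff.1 hp
  rcases isEmpty_or_nonempty (Fin q) with hq | ⟨⟨i⟩⟩
  · simpa [Feasible, linfnorm, l1norm] using hτ
  · exact (mixedNorm_le hα0 hα1 (by linarith [hξl i, hξu i]) (fun i => abs_le.2 ⟨hξl i, hξu i⟩)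
      fun i => abs_le.2 ⟨neg_le.1 (hvl i), hvu i⟩).trans hτ'

lemma sum_lpIndex (f : LPIndex n q → ℝ) :
    ∑ r, f r = ∑ j, f (.inl j) + ∑ j, f (.inr (.inl j)) + f (.inr (.inr (.inl ()))) +
      ∑ i, f (.inr (.inr (.inr (.inl i)))) + ∑ i, f (.inr (.inr (.inr (.inr (.inl i))))) +
      ∑ i, f (.inr (.inr (.inr (.inr (.inr (.inl i)))))) +
      ∑ i, f (.inr (.inr (.inr (.inr (.inr (.inr i)))))) := by
  simp only [Fintype.sum_sum_type, Fintype.sum_unique]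
  ring

lemma exists_eq_lpMult (u : LPIndex n q → ℝ) :
    ∃ w1 w2 w3 w4 w5 w6 w7, u = lpMult w1 w2 w3 w4 w5 w6 w7 :=
  ⟨_, _, u (.inr (.inr (.inl ()))), _, _, _, _, by
    funext r
    rcases r with _ | _ | ⟨⟨⟩⟩ | _ | _ | _ | _ <;> rfl⟩

lemma lpMult_nonneg_iff {w1 w2 : Fin n → ℝ} {w3 : ℝ} {w4 w5 w6 w7 : Fin q → ℝ} :
    0 ≤ lpMult w1 w2 w3 w4 w5 w6 w7 ↔
      (∀ i, 0 ≤ w1 i) ∧ (∀ i, 0 ≤ w2 i) ∧ 0 ≤ w3 ∧ (∀ i, 0 ≤ w4 i) ∧ (∀ i, 0 ≤ w5 i) ∧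
        (∀ i, 0 ≤ w6 i) ∧ (∀ i, 0 ≤ w7 i) := by
  simp [Pi.le_def, lpMult, Sum.forall]

variable (A M y τ α)

lemma sum_lpMult_mul_lpRow (w1 w2 : Fin n → ℝ) (w3 : ℝ) (w4 w5 w6 w7 : Fin q → ℝ)
    (p : LPVar n q) :
    ∑ r, lpMult w1 w2 w3 w4 w5 w6 w7 r * lpRow A M α r p =
      lpForm (-(-w1 + w2 + Aᵀ *ᵥ (M *ᵥ (w4 - w5 - w6 + w7)))) (-(w1 + w2))
        (α * w3 - ∑ i, w4 i - ∑ i, w5 i) (((1 - α) * w3) • 1 - w6 - w7) p := by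
  obtain ⟨x, t, ξ, v⟩ := p
  set Gx := (Mᵀ * A) *ᵥ x
  have hG (s : Fin q → ℝ) : (Aᵀ *ᵥ (M *ᵥ s)) ⬝ᵥ x = s ⬝ᵥ Gx := by
    rw [mulVec_transpose, dotProduct_mulVec, ← vecMul_vecMul, vecMul_transpose]
  have h1 : ∑ j, w1 j * lpRow A M α (.inl j) (x, t, ξ, v) = w1 ⬝ᵥ x - w1 ⬝ᵥ t := by
    simp only [lpRow, lpForm_apply, single_dotProduct, neg_dotProduct, zero_dotProduct, zero_mul]
    simp [dotProduct, mul_add, Finset.sum_add_distrib, sub_eq_add_neg]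
  have h2 : ∑ j, w2 j * lpRow A M α (.inr (.inl j)) (x, t, ξ, v) = -(w2 ⬝ᵥ x) - w2 ⬝ᵥ t := by
    simp only [lpRow, lpForm_apply, single_dotProduct, neg_dotProduct, zero_dotProduct, zero_mul]
    simp [dotProduct, mul_add, Finset.sum_add_distrib, sub_eq_add_neg]
  have h3 : w3 * lpRow A M α (.inr (.inr (.inl ()))) (x, t, ξ, v) =
      α * w3 * ξ + (1 - α) * w3 * ∑ i, v i := by
    simp only [lpRow, lpForm_apply, zero_dotProduct, smul_dotProduct, one_dotProduct, smul_eq_mul]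
    ring
  have h4 : ∑ i, w4 i * lpRow A M α (.inr (.inr (.inr (.inl i)))) (x, t, ξ, v) =
      -(w4 ⬝ᵥ Gx) - (∑ i, w4 i) * ξ := by
    simp only [lpRow, lpForm_apply, neg_dotProduct, zero_dotProduct]
    simp [dotProduct, Gx, mulVec, sub_eq_add_neg, mul_add, Finset.sum_add_distrib, Finset.sum_mul]
  have h5 : ∑ i, w5 i * lpRow A M α (.inr (.inr (.inr (.inr (.inl i))))) (x, t, ξ, v) =
      w5 ⬝ᵥ Gx - (∑ i, w5 i) * ξ := by
    simp only [lpRow, lpForm_apply, zero_dotProduct]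
    simp [dotProduct, Gx, mulVec, sub_eq_add_neg, mul_add, Finset.sum_add_distrib, Finset.sum_mul]
  have h6 : ∑ i, w6 i * lpRow A M α (.inr (.inr (.inr (.inr (.inr (.inl i)))))) (x, t, ξ, v) =
      w6 ⬝ᵥ Gx - w6 ⬝ᵥ v := by
    simp only [lpRow, lpForm_apply, single_dotProduct, neg_dotProduct, zero_dotProduct, zero_mul]
    simp [dotProduct, Gx, mulVec, sub_eq_add_neg, mul_add, Finset.sum_add_distrib]
  have h7 : ∑ i, w7 i * lpRow A M α (.inr (.inr (.inr (.inr (.inr (.inr i)))))) (x, t, ξ, v) =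
      -(w7 ⬝ᵥ Gx) - w7 ⬝ᵥ v := by
    simp only [lpRow, lpForm_apply, single_dotProduct, neg_dotProduct, zero_dotProduct, zero_mul]
    simp [dotProduct, Gx, mulVec, sub_eq_add_neg, mul_add, Finset.sum_add_distrib]
  rw [sum_lpIndex]
  simp only [lpMult, Sum.elim_inl, Sum.elim_inr, h1, h2, h3, h4, h5, h6, h7, lpForm_apply,
    sub_dotProduct, add_dotProduct, neg_dotProduct, smul_dotProduct, one_dotProduct, smul_eq_mul,
    hG]
  ring

lemma sum_lpMult_mul_lpBound (w1 w2 : Fin n → ℝ) (w3 : ℝ) (w4 w5 w6 w7 : Fin q → ℝ) :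
    ∑ r, lpMult w1 w2 w3 w4 w5 w6 w7 r * lpBound M y τ r =
      τ * w3 - y ⬝ᵥ M *ᵥ (w4 - w5 - w6 + w7) := by
  rw [sum_lpIndex, dotProduct_mulVec, ← mulVec_transpose, dotProduct_comm]
  simp only [lpMult, lpBound, Sum.elim_inl, Sum.elim_inr, Pi.zero_apply, mul_zero,
    Finset.sum_const_zero, Pi.neg_apply, mul_neg, Finset.sum_neg_distrib, sub_dotProduct,
    add_dotProduct]
  simp only [dotProduct]
  ring

variable {A M y τ α}

theorem exists_kktSysDS_of_isMinimizer (hα0 : 0 ≤ α) (hα1 : α ≤ 1) {x : Fin n → ℝ}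
    (hx : Feasible A M y τ α x) (hmin : ∀ z, Feasible A M y τ α z → l1norm x ≤ l1norm z) :
    ∃ (t : Fin n → ℝ) (ξ : ℝ) (v : Fin q → ℝ) (w1 w2 : Fin n → ℝ) (w3 : ℝ)
      (w4 w5 w6 w7 : Fin q → ℝ), KKTsysDS A M y τ α x t ξ v w1 w2 w3 w4 w5 w6 w7 := by
  have hτ : 0 ≤ τ := (add_nonneg (mul_nonneg hα0 (linfnorm_nonneg _))
    (mul_nonneg (sub_nonneg.2 hα1) (l1norm_nonneg _))).trans hx
  have hlift := lpFeasible_lift hx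
  obtain ⟨u, hu, hdual, hgap⟩ := exists_nonneg_dual_certificate (lpRow A M α) (lpBound M y τ)
    lpObj hlift fun ⟨x', t', ξ', v'⟩ hp => by
      obtain ⟨ht₁, ht₂, -⟩ := lpFeasible_iff.1 hp
      calc lpObj (lift A M y x) = l1norm x := lpObj_apply _
        _ ≤ l1norm x' := hmin x' (feasible_of_lpFeasible hα0 hα1 hτ hp)
        _ ≤ ∑ i, t' i := l1norm_le_sum fun i => abs_le.2 ⟨neg_le.1 (ht₂ i), ht₁ i⟩
        _ = lpObj (x', t', ξ', v') := (lpObj_apply (x', t', ξ', v')).symm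
  obtain ⟨w1, w2, w3, w4, w5, w6, w7, rfl⟩ := exists_eq_lpMult u
  obtain ⟨hstat, ht, hξ, hv⟩ := lpForm_eq_zero fun p => by
    rw [← lpObj_add_lpForm, ← sum_lpMult_mul_lpRow]
    exact hdual p
  rw [sum_lpMult_mul_lpBound] at hgap
  obtain ⟨p1, p2, p3, p4, p5, p6, p7⟩ := lpFeasible_iff.1 hlift
  obtain ⟨n1, n2, n3, n4, n5, n6, n7⟩ := lpMult_nonneg_iff.1 hu
  refine ⟨_, _, _, w1, w2, w3, w4, w5, w6, w7, p1, p2, p3, p4, p5, p6, p7, neg_eq_zero.1 hstat,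
    fun j => ?_, by linarith, fun i => ?_, ?_, fun _ => abs_nonneg _, linfnorm_nonneg _,
    fun _ => abs_nonneg _, n1, n2, n3, n4, n5, n6, n7⟩
  · linarith [show 1 + -(w1 j + w2 j) = 0 from congrFun ht j]
  · linarith [show (1 - α) * w3 * 1 - w6 i - w7 i = 0 from congrFun hv i]
  · linarith [show lpObj (lift A M y x) = ∑ i, |x i| from lpObj_apply _]

end DantzigSelector

namespace KKTsysDS

open DantzigSelector

variable {m n q : ℕ} {A : Matrix (Fin m) (Fin n) ℝ} {M : Matrix (Fin m) (Fin q) ℝ}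
  {y : Fin m → ℝ} {τ α : ℝ} {x t : Fin n → ℝ} {ξ : ℝ} {v : Fin q → ℝ} {w1 w2 : Fin n → ℝ} {w3 : ℝ}
  {w4 w5 w6 w7 : Fin q → ℝ}

lemma abs_le_t (hk : KKTsysDS A M y τ α x t ξ v w1 w2 w3 w4 w5 w6 w7) : ∀ i, |x i| ≤ t i := by
  obtain ⟨hxt, hxt', -⟩ := hk
  exact fun i => abs_le.2 ⟨neg_le.1 (hxt' i), hxt i⟩

lemma linfnorm_resid_le (hk : KKTsysDS A M y τ α x t ξ v w1 w2 w3 w4 w5 w6 w7) :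
    linfnorm (resid A M y x) ≤ ξ := by
  obtain ⟨-, -, -, hξl, hξu, -, -, -, -, -, -, -, -, hξ, -⟩ := hk
  exact linfnorm_le hξ fun i => abs_le.2 ⟨hξl i, hξu i⟩

lemma abs_resid_le (hk : KKTsysDS A M y τ α x t ξ v w1 w2 w3 w4 w5 w6 w7) :
    ∀ i, |resid A M y x i| ≤ v i := by
  obtain ⟨-, -, -, -, -, hvu, hvl, -⟩ := hk
  exact fun i => abs_le.2 ⟨neg_le.1 (hvl i), hvu i⟩

lemma feasible (hα0 : 0 ≤ α) (hα1 : α ≤ 1)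
    (hk : KKTsysDS A M y τ α x t ξ v w1 w2 w3 w4 w5 w6 w7) : Feasible A M y τ α x := by
  obtain ⟨-, -, hτ, hξl, hξu, hvu, hvl, -, -, -, -, -, -, hξ, -⟩ := hk
  exact (mixedNorm_le hα0 hα1 hξ (fun i => abs_le.2 ⟨hξl i, hξu i⟩)
    fun i => abs_le.2 ⟨neg_le.1 (hvl i), hvu i⟩).trans hτ

/-- Weak duality. -/
lemma sum_le_l1norm (hk : KKTsysDS A M y τ α x t ξ v w1 w2 w3 w4 w5 w6 w7) {z : Fin n → ℝ}
    (hz : Feasible A M y τ α z) : ∑ i, t i ≤ l1norm z := by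
  obtain ⟨-, -, -, -, -, -, -, hstat, hw12, hw45, hw67, hgap, -, -, -, n1, n2, n3, n4, n5, n6, n7⟩ :=
    hk
  have hu : 0 ≤ lpMult w1 w2 w3 w4 w5 w6 w7 := lpMult_nonneg_iff.2 ⟨n1, n2, n3, n4, n5, n6, n7⟩
  have hdual := Finset.sum_le_sum fun r (_ : r ∈ Finset.univ) =>
    mul_le_mul_of_nonneg_left (lpFeasible_lift hz r) (hu r)
  rw [sum_lpMult_mul_lpRow, sum_lpMult_mul_lpBound, hstat, neg_zero] at hdual
  have ht : (w1 + w2) ⬝ᵥ (fun i => |z i|) ≤ l1norm z :=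
    Finset.sum_le_sum fun i _ => mul_le_of_le_one_left (abs_nonneg _) (hw12 i)
  have hξ : 0 ≤ (α * w3 - ∑ i, w4 i - ∑ i, w5 i) * linfnorm (resid A M y z) :=
    mul_nonneg (by linarith) (linfnorm_nonneg _)
  have hv : 0 ≤ (((1 - α) * w3) • 1 - w6 - w7) ⬝ᵥ (fun i => |resid A M y z i|) :=
    Finset.sum_nonneg fun i _ =>
      mul_nonneg (show 0 ≤ (1 - α) * w3 * 1 - w6 i - w7 i by linarith [hw67 i]) (abs_nonneg _)
  simp only [lift, lpForm_apply, zero_dotProduct, neg_dotProduct] at hdual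
  linarith

end KKTsysDS

theorem DS_optimality_KKT_general (m n q : ℕ)
    (A : Matrix (Fin m) (Fin n) ℝ) (M : Matrix (Fin m) (Fin q) ℝ)
    (y : Fin m → ℝ) (τ α : ℝ) (hα0 : 0 ≤ α) (hα1 : α ≤ 1)
    (xstar : Fin n → ℝ) :
    ((α * linfnorm (resid A M y xstar) + (1 - α) * l1norm (resid A M y xstar) ≤ τ ∧
        ∀ z : Fin n → ℝ,
          α * linfnorm (resid A M y z) + (1 - α) * l1norm (resid A M y z) ≤ τ →
            l1norm xstar ≤ l1norm z) ↔
      (∃ (t : Fin n → ℝ) (ξ : ℝ) (v : Fin q → ℝ) (w1 w2 : Fin n → ℝ) (w3 : ℝ)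
          (w4 w5 w6 w7 : Fin q → ℝ),
        KKTsysDS A M y τ α xstar t ξ v w1 w2 w3 w4 w5 w6 w7)) ∧
    (∀ (t : Fin n → ℝ) (ξ : ℝ) (v : Fin q → ℝ) (w1 w2 : Fin n → ℝ) (w3 : ℝ)
        (w4 w5 w6 w7 : Fin q → ℝ),
      KKTsysDS A M y τ α xstar t ξ v w1 w2 w3 w4 w5 w6 w7 →
        t = (fun i => |xstar i|) ∧
        linfnorm (resid A M y xstar) ≤ ξ ∧
        (∀ i, |resid A M y xstar i| ≤ v i)) := by
  refine ⟨⟨fun ⟨hx, hmin⟩ => DantzigSelector.exists_kktSysDS_of_isMinimizer hα0 hα1 hx hmin, ?_⟩,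
    fun t ξ v w1 w2 w3 w4 w5 w6 w7 hk => ⟨?_, hk.linfnorm_resid_le, hk.abs_resid_le⟩⟩
  · rintro ⟨t, ξ, v, w1, w2, w3, w4, w5, w6, w7, hk⟩
    exact ⟨hk.feasible hα0 hα1, fun z hz => (l1norm_le_sum hk.abs_le_t).trans (hk.sum_le_l1norm hz)⟩
  · -- `|x*| ≤ t` and, by weak duality at `z = x*`, `∑ t ≤ ‖x*‖₁`
    refine ((show (fun i => |xstar i|) ≤ t from hk.abs_le_t).eq_of_not_lt fun hlt => ?_).symm
    exact (Fintype.sum_strictMono hlt).not_ge (hk.sum_le_l1norm (hk.feasible hα0 hα1))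

/-- Lemma 3.1: `x*` is an optimal solution of the Dantzig selector problem
`min {‖x‖₁ : α‖Mᵀ(Ax−y)‖_∞ + (1−α)‖Mᵀ(Ax−y)‖₁ ≤ τ}` iff the KKT system has a
solution; moreover, any solution of the KKT system satisfies `t = |x*|`,
`ξ ≥ ‖ϑ(x*)‖_∞` and `v ≥ |ϑ(x*)|` componentwise. -/
theorem DS_optimality_KKT (m n q : ℕ)
    (A : Matrix (Fin m) (Fin n) ℝ) (M : Matrix (Fin m) (Fin q) ℝ)
    (y : Fin m → ℝ) (τ α : ℝ) (hτ : 0 ≤ τ) (hα0 : 0 ≤ α) (hα1 : α ≤ 1)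
    (xstar : Fin n → ℝ) :
    ((α * linfnorm (resid A M y xstar) + (1 - α) * l1norm (resid A M y xstar) ≤ τ ∧
        ∀ z : Fin n → ℝ,
          α * linfnorm (resid A M y z) + (1 - α) * l1norm (resid A M y z) ≤ τ →
            l1norm xstar ≤ l1norm z) ↔
      (∃ (t : Fin n → ℝ) (ξ : ℝ) (v : Fin q → ℝ) (w1 w2 : Fin n → ℝ) (w3 : ℝ)
          (w4 w5 w6 w7 : Fin q → ℝ),
        KKTsysDS A M y τ α xstar t ξ v w1 w2 w3 w4 w5 w6 w7)) ∧
    (∀ (t : Fin n → ℝ) (ξ : ℝ) (v : Fin q → ℝ) (w1 w2 : Fin n → ℝ) (w3 : ℝ)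
        (w4 w5 w6 w7 : Fin q → ℝ),
      KKTsysDS A M y τ α xstar t ξ v w1 w2 w3 w4 w5 w6 w7 →
        t = (fun i => |xstar i|) ∧
        linfnorm (resid A M y xstar) ≤ ξ ∧
        (∀ i, |resid A M y xstar i| ≤ v i)) :=
  DS_optimality_KKT_general m n q A M y τ α hα0 hα1 xstar
end

section
/- Let A ∈ ℝ^{m×n} with m < n and rank(A) = m. If A satisfies the null space property (NSP) of order k, then Aᵀ satisfies the weak range space property (weak RSP) of order k. -/
open Matrix

/-- `A` satisfies the null space property (NSP) of order `k`. -/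
def NSP {m n : ℕ} (A : Matrix (Fin m) (Fin n) ℝ) (k : ℕ) : Prop :=
  ∀ ζ : Fin n → ℝ, A.mulVec ζ = 0 → ζ ≠ 0 →
    ∀ S : Finset (Fin n), S.card ≤ k →
      ∑ i ∈ S, |ζ i| < ∑ i ∈ Sᶜ, |ζ i|

private lemma neg_sign_mul (x : ℝ) : (-Real.sign x) * x = -|x| := by
  rcases lt_trichotomy x 0 with h | h | h
  · rw [Real.sign_of_neg h, abs_of_neg h]; ring
  · simp [h]
  · rw [Real.sign_of_pos h, abs_of_pos h]; ring

private lemma abs_sign_le (x : ℝ) : |Real.sign x| ≤ 1 := by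
  rcases lt_trichotomy x 0 with h | h | h
  · rw [Real.sign_of_neg h]; norm_num
  · simp [h]
  · rw [Real.sign_of_pos h]; norm_num

/-- If `A` satisfies the NSP of order `k`, then `Aᵀ` satisfies the weak RSP of order `k`. -/
theorem NSP_implies_weakRSP (m n k : ℕ) (hmn : m < n)
    (A : Matrix (Fin m) (Fin n) ℝ) (hArank : A.rank = m)
    (hNSP : NSP A k) : WeakRSP A k := by
  intro S₁ S₂ hdisj hcard
  set S : Finset (Fin n) := S₁ ∪ S₂ with hSdef
  set c : Fin n → ℝ := fun i => if i ∈ S₁ then 1 else -1 with hcdef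
  set F : Fin n → Set ℝ := fun i => if i ∈ S then {c i} else Set.Icc (-1) 1 with hFdef
  set K : Set (Fin n → ℝ) := Set.pi Set.univ F with hKdef
  set L : Submodule ℝ (Fin n → ℝ) := LinearMap.range Aᵀ.mulVecLin with hLdef
  by_cases hLK : ∃ ζ ∈ K, ζ ∈ L
  · obtain ⟨ζ, hζK, u, hu⟩ := hLK
    have huζ : Aᵀ.mulVec u = ζ := hu
    have hmem : ∀ i, ζ i ∈ F i := fun i => hζK i (Set.mem_univ i)
    refine ⟨u, ?_, ?_, ?_⟩
    · intro i hi
      have h1 : i ∈ S := Finset.mem_union_left _ hi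
      have := hmem i
      rw [hFdef] at this
      simp only [h1, if_pos] at this
      rw [huζ, Set.mem_singleton_iff.mp this, hcdef]
      simp [hi]
    · intro i hi
      have h1 : i ∈ S := Finset.mem_union_right _ hi
      have hi1 : i ∉ S₁ := fun h => (Finset.disjoint_left.mp hdisj h) hi
      have := hmem i
      rw [hFdef] at this
      simp only [h1, if_pos] at this
      rw [huζ, Set.mem_singleton_iff.mp this, hcdef]
      simp [hi1]
    · intro i hi1 hi2
      have h1 : i ∉ S := by simp [hSdef, hi1, hi2]
      have := hmem i
      rw [hFdef] at this
      simp only [h1, if_neg, not_false_iff] at this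
      rw [huζ]
      exact abs_le.mpr ⟨this.1, this.2⟩
  · exfalso
    push_neg at hLK
    -- K is compact convex nonempty, L closed convex, disjoint
    have hKcomp : IsCompact K := by
      apply isCompact_univ_pi
      intro i
      rw [hFdef]
      dsimp only
      split_ifs
      · exact isCompact_singleton
      · exact isCompact_Icc
    have hKconv : Convex ℝ K := by
      apply convex_pi
      intro i _
      rw [hFdef]
      dsimp only
      split_ifs
      · exact convex_singleton _
      · exact convex_Icc _ _
    have hLclosed : IsClosed (L : Set (Fin n → ℝ)) := Submodule.closed_of_finiteDimensional L
    have hdisjLK : Disjoint (L : Set (Fin n → ℝ)) K := by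
      rw [Set.disjoint_right]
      intro ζ hζK hζL
      exact hLK ζ hζK hζL
    obtain ⟨f, a, b, hfa, hab, hfb⟩ :=
      geometric_hahn_banach_closed_compact L.convex hLclosed hKconv hKcomp hdisjLK
    -- f vanishes on L
    have hf0 : ∀ x ∈ L, f x = 0 := by
      intro x hx
      by_contra h
      have ht : ∀ t : ℝ, t * f x < a := by
        intro t
        have : (t • x) ∈ L := L.smul_mem t hx
        have := hfa _ this
        rwa [f.map_smul, smul_eq_mul] at this
      have h1 := ht ((|a| + 1) / f x)
      rw [div_mul_cancel₀ _ h] at h1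
      have : a ≤ |a| := le_abs_self a
      linarith
    have ha0 : 0 < a := by
      have := hfa 0 L.zero_mem
      rwa [map_zero] at this
    have hpos : ∀ ζ ∈ K, 0 < f ζ := fun ζ hζ => lt_trans ha0 (lt_trans hab (hfb ζ hζ))
    -- representation of f
    set v : Fin n → ℝ := fun i => f (Pi.single i 1) with hvdef
    have hrep : ∀ ζ : Fin n → ℝ, f ζ = ∑ i, ζ i * v i := by
      intro ζ
      have hζ : ζ = ∑ i, ζ i • (Pi.single i 1 : Fin n → ℝ) := by
        funext j
        simp [Finset.sum_apply, Pi.single_apply, Finset.sum_ite_eq']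
      conv_lhs => rw [hζ]
      rw [map_sum]
      simp [hvdef, smul_eq_mul]
    -- A v = 0
    have hAv : A.mulVec v = 0 := by
      funext j
      have hrow : (fun i => A j i) = Aᵀ.mulVec (Pi.single j 1) := by
        funext i
        simp [Matrix.mulVec, dotProduct, Pi.single_apply, Finset.sum_ite_eq']
      have h1 : f (fun i => A j i) = 0 := by
        rw [hrow]
        exact hf0 _ ⟨(Pi.single j 1 : Fin m → ℝ), rfl⟩
      rw [hrep] at h1
      simpa [Matrix.mulVec, dotProduct] using h1
    -- the two witnesses in K
    have hmemK : ∀ g : Fin n → ℝ, (∀ i ∉ S, g i ∈ Set.Icc (-1:ℝ) 1) →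
        (fun i => if i ∈ S then c i else g i) ∈ K := by
      intro g hg
      intro i _
      rw [hFdef]
      by_cases h : i ∈ S <;> simp [h, hg i]
    have hζstar : (fun i => if i ∈ S then c i else -Real.sign (v i)) ∈ K := by
      apply hmemK
      intro i _
      rw [Set.mem_Icc, ← abs_le, abs_neg]
      exact abs_sign_le _
    have hfζstar := hpos _ hζstar
    rw [hrep] at hfζstar
    have hsplit : ∑ i, (if i ∈ S then c i else -Real.sign (v i)) * v i
        = ∑ i ∈ S, c i * v i + ∑ i ∈ Sᶜ, (-Real.sign (v i)) * v i := by
      rw [← Finset.sum_add_sum_compl S]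
      congr 1
      · exact Finset.sum_congr rfl (fun i hi => by simp [hi])
      · refine Finset.sum_congr rfl (fun i hi => ?_)
        rw [Finset.mem_compl] at hi
        simp [hi]
    rw [hsplit] at hfζstar
    have hneg : ∑ i ∈ Sᶜ, (-Real.sign (v i)) * v i = -∑ i ∈ Sᶜ, |v i| := by
      rw [← Finset.sum_neg_distrib]
      exact Finset.sum_congr rfl (fun i _ => neg_sign_mul _)
    rw [hneg] at hfζstar
    -- so ∑_{Sᶜ} |v| < ∑_S c v ≤ ∑_S |v|
    have hle : ∑ i ∈ S, c i * v i ≤ ∑ i ∈ S, |v i| := by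
      apply Finset.sum_le_sum
      intro i _
      calc c i * v i ≤ |c i * v i| := le_abs_self _
        _ = |c i| * |v i| := abs_mul _ _
        _ ≤ 1 * |v i| := by
            apply mul_le_mul_of_nonneg_right _ (abs_nonneg _)
            rw [hcdef]; dsimp only; split_ifs <;> norm_num
        _ = |v i| := one_mul _
    -- v ≠ 0
    have hv0 : v ≠ 0 := by
      intro h
      rw [h] at hfζstar
      simp at hfζstar
    have hcardS : S.card ≤ k := by
      rw [hSdef, Finset.card_union_of_disjoint hdisj]
      exact hcard
    have hNSPv := hNSP v hAv hv0 S hcardS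
    linarith
end

section
/- Let Ω ⊆ T be two compact convex sets in ℝⁿ. Then for every x ∈ ℝⁿ, ‖Π_Ω(x) − Π_T(x)‖₂² ≤ d^H(Ω, T) · ‖x − Π_Ω(x)‖₂. -/
open Metric RealInnerProductSpace

lemma proj_var_ineq {n : ℕ} {s : Set (EuclideanSpace ℝ (Fin n))} (hconv : Convex ℝ s)
    {x p : EuclideanSpace ℝ (Fin n)} (hp : p ∈ s)
    (hmin : ∀ z ∈ s, ‖x - p‖ ≤ ‖x - z‖) :
    ∀ z ∈ s, ⟪x - p, z - p⟫ ≤ 0 := by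
  haveI : Nonempty s := ⟨⟨p, hp⟩⟩
  have h : ‖x - p‖ = ⨅ w : s, ‖x - w‖ := by
    refine le_antisymm (le_ciInf fun w => hmin w w.2) ?_
    exact ciInf_le ⟨0, fun a ⟨w, hw⟩ => hw ▸ norm_nonneg _⟩ (⟨p, hp⟩ : s)
  exact (norm_eq_iInf_iff_real_inner_le_zero hconv hp).mp h

/-- Lemma 4.1(i): for compact convex sets `Ω ⊆ T` in Euclidean space and any `x`,
`‖Π_Ω(x) − Π_T(x)‖² ≤ d^H(Ω, T) ‖x − Π_Ω(x)‖`, where projections are characterized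
as the closest points. -/
theorem projection_hausdorff_estimate (n : ℕ)
    (Ω T : Set (EuclideanSpace ℝ (Fin n)))
    (hΩT : Ω ⊆ T)
    (hΩc : IsCompact Ω) (hΩconv : Convex ℝ Ω)
    (hTc : IsCompact T) (hTconv : Convex ℝ T)
    (x pΩ pT : EuclideanSpace ℝ (Fin n))
    (hpΩmem : pΩ ∈ Ω) (hpΩ : ∀ z ∈ Ω, ‖x - pΩ‖ ≤ ‖x - z‖)
    (hpTmem : pT ∈ T) (hpT : ∀ z ∈ T, ‖x - pT‖ ≤ ‖x - z‖) :
    ‖pΩ - pT‖ ^ 2 ≤ Metric.hausdorffDist Ω T * ‖x - pΩ‖ := by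
  -- find q ∈ Ω closest to pT
  obtain ⟨q, hqΩ, hq⟩ := hΩc.exists_infDist_eq_dist ⟨pΩ, hpΩmem⟩ pT
  have hEdist : EMetric.hausdorffEdist Ω T ≠ ⊤ :=
    Metric.hausdorffEdist_ne_top_of_nonempty_of_bounded ⟨pΩ, hpΩmem⟩ ⟨pT, hpTmem⟩
      hΩc.isBounded hTc.isBounded
  have hqle : dist pT q ≤ Metric.hausdorffDist Ω T := by
    rw [← hq, Metric.hausdorffDist_comm]
    exact Metric.infDist_le_hausdorffDist_of_mem hpTmem (EMetric.hausdorffEdist_comm (s := Ω) (t := T) ▸ hEdist)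
  -- variational inequalities
  have h1 : ⟪x - pT, pΩ - pT⟫ ≤ 0 := proj_var_ineq hTconv hpTmem hpT pΩ (hΩT hpΩmem)
  have h2 : ⟪x - pΩ, q - pΩ⟫ ≤ 0 := proj_var_ineq hΩconv hpΩmem hpΩ q hqΩ
  have key : ‖pΩ - pT‖ ^ 2 ≤ ⟪pΩ - x, q - pT⟫ := by
    have expand : ‖pΩ - pT‖ ^ 2 =
        ⟪pΩ - x, pΩ - pT⟫ + ⟪x - pT, pΩ - pT⟫ := by
      rw [← real_inner_self_eq_norm_sq, ← inner_add_left]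
      congr 1
      abel
    have expand2 : ⟪pΩ - x, pΩ - pT⟫ =
        ⟪pΩ - x, pΩ - q⟫ + ⟪pΩ - x, q - pT⟫ := by
      rw [← inner_add_right]; congr 1; abel
    have h2' : ⟪pΩ - x, pΩ - q⟫ ≤ 0 := by
      have : ⟪pΩ - x, pΩ - q⟫ = ⟪x - pΩ, q - pΩ⟫ := by
        rw [← inner_neg_neg]; congr 1 <;> abel
      linarith [this ▸ h2]
    calc ‖pΩ - pT‖ ^ 2 = ⟪pΩ - x, pΩ - pT⟫ + ⟪x - pT, pΩ - pT⟫ := expand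
      _ ≤ ⟪pΩ - x, pΩ - pT⟫ := by linarith
      _ = ⟪pΩ - x, pΩ - q⟫ + ⟪pΩ - x, q - pT⟫ := expand2
      _ ≤ ⟪pΩ - x, q - pT⟫ := by linarith
  have cauchy : ⟪pΩ - x, q - pT⟫ ≤ ‖pΩ - x‖ * ‖q - pT‖ := real_inner_le_norm _ _
  have hnorm : ‖q - pT‖ ≤ Metric.hausdorffDist Ω T := by
    rw [← dist_eq_norm, dist_comm]; exact hqle
  have : ‖pΩ - x‖ = ‖x - pΩ‖ := norm_sub_rev _ _
  calc ‖pΩ - pT‖ ^ 2 ≤ ⟪pΩ - x, q - pT⟫ := key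
    _ ≤ ‖pΩ - x‖ * ‖q - pT‖ := cauchy
    _ ≤ ‖x - pΩ‖ * Metric.hausdorffDist Ω T := by
        rw [this]; exact mul_le_mul_of_nonneg_left hnorm (norm_nonneg _)
    _ = Metric.hausdorffDist Ω T * ‖x - pΩ‖ := mul_comm _ _
end

section
/- Let A ∈ ℝ^{m×n}, M ∈ ℝ^{m×q}, y ∈ ℝ^m and μ > 0, let ρ* be the optimal value of the LASSO problem min{φ(Mᵀ(Ax − y)) : ‖x‖₁ ≤ μ}, and let Λ* = {x ∈ ℝⁿ : ‖x‖₁ ≤ μ, φ(Mᵀ(Ax − y)) ≤ ρ*} denote its solution set. Let (ε_j)_{j≥1} be a strictly decreasing sequence of positive numbers with ε_j → 0, and for each j let Q_j = ⋂_{i ∈ I_j} {u ∈ ℝ^q : (a^{j,i})ᵀu ≤ 1} be a polytope defined by finitely many vectors a^{j,i} with φ*(a^{j,i}) = 1, satisfying 𝔅^φ ⊆ Q_j ⊆ (1+ε_j)·𝔅^φ. Define Λ_j = {x ∈ ℝⁿ : ‖x‖₁ ≤ μ, (a^{j,i})ᵀ(Mᵀ(Ax − y)) ≤ ρ* for all i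 ∈ I_j}. For each j, let x_j be an arbitrary point of Λ_j. Then every accumulation point x̂ of the sequence (x_j)_{j≥1} satisfies ‖x̂‖₁ ≤ μ and φ(Mᵀ(Ax̂ − y)) ≤ ρ*, i.e., x̂ ∈ Λ*. -/
open Matrix Filter Topology Pointwise

/-!
Since `Q_j ⊆ (1 + ε_j) • 𝔅^φ`, rescaling the constraints of `Λ_j` gives
`φ(Mᵀ(A x_j - y)) ≤ (1 + ε_j) ρ*`. The pairs `(x_j, ε_j)` cluster at `(x̂, 0)`, and
`{(z, e) | ‖z‖₁ ≤ μ ∧ φ(Mᵀ(A z - y)) ≤ |1 + e| ρ*}` is closed because `φ`, being convex on a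
finite-dimensional space, is continuous; so `(x̂, 0)` lies in it.
-/

theorem MapClusterPt.prodMk {α X Y : Type*} [TopologicalSpace X] [TopologicalSpace Y]
    {F : Filter α} {u : α → X} {v : α → Y} {x : X} {y : Y}
    (hu : MapClusterPt x F u) (hv : Tendsto v F (𝓝 y)) :
    MapClusterPt (x, y) F fun a => (u a, v a) := by
  rw [mapClusterPt_iff_frequently] at hu
  rw [((𝓝 x).basis_sets.prod_nhds (𝓝 y).basis_sets).mapClusterPt_iff_frequently]
  rintro ⟨s, t⟩ ⟨hs, ht⟩
  exact (hu s hs).and_eventually (hv ht)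

theorem continuous_l1norm {n : ℕ} : Continuous (l1norm : (Fin n → ℝ) → ℝ) :=
  continuous_finsetSum _ fun i _ => (continuous_apply i).abs

namespace IsNorm

variable {q : ℕ} {φ : (Fin q → ℝ) → ℝ}

theorem convexOn (hφ : IsNorm φ) : ConvexOn ℝ Set.univ φ := by
  refine ⟨convex_univ, fun u _ w _ s t hs ht _ => ?_⟩
  calc φ (s • u + t • w) ≤ φ (s • u) + φ (t • w) := hφ.triangle _ _
    _ = s • φ u + t • φ w := by
      rw [hφ.smul_eq, hφ.smul_eq, abs_of_nonneg hs, abs_of_nonneg ht, smul_eq_mul, smul_eq_mul]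

protected theorem continuous (hφ : IsNorm φ) : Continuous φ :=
  continuousOn_univ.mp (hφ.convexOn.continuousOn isOpen_univ)

theorem le_abs_of_mem_smul_unitBall (hφ : IsNorm φ) {c : ℝ} {u : Fin q → ℝ}
    (hu : u ∈ c • {w | φ w ≤ 1}) : φ u ≤ |c| := by
  obtain ⟨w, hw, rfl⟩ := hu
  rw [hφ.smul_eq]
  exact mul_le_of_le_one_right (abs_nonneg c) hw

theorem le_abs_mul_of_dotProduct_le (hφ : IsNorm φ) {ι : Type*} {a : ι → Fin q → ℝ} {c ρ : ℝ}
    (hQ : {u | ∀ i, a i ⬝ᵥ u ≤ 1} ⊆ c • {u | φ u ≤ 1}) (hρ : 0 ≤ ρ) {u : Fin q → ℝ}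
    (hu : ∀ i, a i ⬝ᵥ u ≤ ρ) : φ u ≤ |c| * ρ := by
  -- Rescale by every `t > ρ` rather than by `ρ` itself, which may be `0`.
  have hbound : ∀ t > ρ, φ u ≤ |c| * t := by
    intro t ht
    have ht0 : 0 < t := hρ.trans_lt ht
    have hmem : t⁻¹ • u ∈ {u | ∀ i, a i ⬝ᵥ u ≤ 1} := fun i => by
      rw [dotProduct_smul, smul_eq_mul, inv_mul_le_iff₀ ht0, mul_one]
      exact (hu i).trans ht.le
    have := hφ.le_abs_of_mem_smul_unitBall (hQ hmem)
    rwa [hφ.smul_eq, abs_inv, abs_of_pos ht0, inv_mul_le_iff₀ ht0, mul_comm] at this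
  have hlim : Tendsto (|c| * ·) (𝓝[>] ρ) (𝓝 (|c| * ρ)) :=
    ((continuous_const_mul |c|).tendsto ρ).mono_left nhdsWithin_le_nhds
  exact ge_of_tendsto hlim (eventually_nhdsWithin_of_forall hbound)

end IsNorm

theorem LASSO_relaxation_accumulation_general (m n q : ℕ)
    (A : Matrix (Fin m) (Fin n) ℝ) (M : Matrix (Fin m) (Fin q) ℝ)
    (y : Fin m → ℝ) (μ : ℝ)
    (φ : (Fin q → ℝ) → ℝ) (hφ : IsNorm φ)
    (ρ : ℝ)
    (hρ : ρ = sInf {t : ℝ | ∃ x : Fin n → ℝ,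
      l1norm x ≤ μ ∧ t = φ (Mᵀ.mulVec (A.mulVec x - y))})
    (ε : ℕ → ℝ)
    (hεlim : Tendsto ε atTop (𝓝 0))
    (N : ℕ → ℕ) (a : (j : ℕ) → Fin (N j) → (Fin q → ℝ))
    (hQB : ∀ j, {u : Fin q → ℝ | ∀ i, ∑ r, a j i r * u r ≤ 1} ⊆
      (1 + ε j) • {u : Fin q → ℝ | φ u ≤ 1})
    (x : ℕ → (Fin n → ℝ))
    (hx : ∀ j, l1norm (x j) ≤ μ ∧
      ∀ i, ∑ r, a j i r * Mᵀ.mulVec (A.mulVec (x j) - y) r ≤ ρ)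
    (xhat : Fin n → ℝ) (hcluster : MapClusterPt xhat atTop x) :
    l1norm xhat ≤ μ ∧ φ (Mᵀ.mulVec (A.mulVec xhat - y)) ≤ ρ := by
  have hρ0 : 0 ≤ ρ := hρ ▸ Real.sInf_nonneg (by rintro t ⟨z, -, rfl⟩; exact hφ.nonneg _)
  let S : Set ((Fin n → ℝ) × ℝ) :=
    {p | l1norm p.1 ≤ μ ∧ φ (Mᵀ *ᵥ (A *ᵥ p.1 - y)) ≤ |1 + p.2| * ρ}
  have hS : IsClosed S := by
    have hres : Continuous fun z : Fin n → ℝ => Mᵀ *ᵥ (A *ᵥ z - y) := by fun_prop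
    exact (isClosed_le (continuous_l1norm.comp continuous_fst) continuous_const).inter
      (isClosed_le (hφ.continuous.comp (hres.comp continuous_fst)) (by fun_prop))
  have hmem : ∀ j, (x j, ε j) ∈ S := fun j =>
    ⟨(hx j).1, hφ.le_abs_mul_of_dotProduct_le (hQB j) hρ0 (hx j).2⟩
  simpa [S] using hS.mem_of_mapClusterPt (hcluster.prodMk hεlim) (Eventually.of_forall hmem)

/-- Lemma 5.1(i): any accumulation point of points taken from the relaxed LASSO
solution sets `Λ_j` lies in the LASSO solution set `Λ*`. -/
theorem LASSO_relaxation_accumulation (m n q : ℕ)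
    (A : Matrix (Fin m) (Fin n) ℝ) (M : Matrix (Fin m) (Fin q) ℝ)
    (y : Fin m → ℝ) (μ : ℝ) (hμ : 0 < μ)
    (φ : (Fin q → ℝ) → ℝ) (hφ : IsNorm φ)
    (hbasis : ∀ i : Fin q, φ (stdBasis i) = 1)
    (hdbasis : ∀ i : Fin q, dualNorm φ (stdBasis i) = 1)
    (ρ : ℝ)
    (hρ : ρ = sInf {t : ℝ | ∃ x : Fin n → ℝ,
      l1norm x ≤ μ ∧ t = φ (Mᵀ.mulVec (A.mulVec x - y))})
    (ε : ℕ → ℝ) (hεpos : ∀ j, 0 < ε j) (hεanti : StrictAnti ε)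
    (hεlim : Tendsto ε atTop (𝓝 0))
    (N : ℕ → ℕ) (a : (j : ℕ) → Fin (N j) → (Fin q → ℝ))
    (ha : ∀ j i, dualNorm φ (a j i) = 1)
    (hBQ : ∀ j, {u : Fin q → ℝ | φ u ≤ 1} ⊆
      {u : Fin q → ℝ | ∀ i, ∑ r, a j i r * u r ≤ 1})
    (hQB : ∀ j, {u : Fin q → ℝ | ∀ i, ∑ r, a j i r * u r ≤ 1} ⊆
      (1 + ε j) • {u : Fin q → ℝ | φ u ≤ 1})
    (x : ℕ → (Fin n → ℝ))
    (hx : ∀ j, l1norm (x j) ≤ μ ∧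
      ∀ i, ∑ r, a j i r * Mᵀ.mulVec (A.mulVec (x j) - y) r ≤ ρ)
    (xhat : Fin n → ℝ) (hcluster : MapClusterPt xhat atTop x) :
    l1norm xhat ≤ μ ∧ φ (Mᵀ.mulVec (A.mulVec xhat - y)) ≤ ρ :=
  LASSO_relaxation_accumulation_general m n q A M y μ φ hφ ρ hρ ε hεlim N a hQB x hx xhat hcluster
end
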